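/- arXiv:math/0412145 — 16 statements merged into one kernel-verified Lean document; each statement's English description precedes it below -/
import Mathlib

section
/- Let m, k, n be real numbers and let f(x) = m·x₁² + k·x₁x₂ + n·x₂² be a nondegenerate quadratic form on ℝ² (i.e. k² − 4mn ≠ 0). Suppose there exists an ℝ-bilinear map s : ℝ² × ℝ² → ℝ² such that s(x,y) ∈ ℤ² for all x, y ∈ ℤ² and f(s(x,y)) = f(x)·f(y) for all x, y ∈ ℝ². Then m, k, n are integers; in particular f takes integer values on ℤ². -/
/-- A vector of `ℝ × ℝ` lies in the integer lattice `ℤ²`. -/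
def IsIntVec (x : ℝ × ℝ) : Prop := ∃ a b : ℤ, x = ((a : ℝ), (b : ℝ))

/-- If a nondegenerate quadratic form `f(x) = m x₁² + k x₁ x₂ + n x₂²` on `ℝ²`
admits an integer normed pairing, then `m`, `k`, `n` are integers; in particular
`f` takes integer values on `ℤ²`. -/
theorem stmt0 (m k n : ℝ) (hnd : k ^ 2 - 4 * m * n ≠ 0)
    (f : ℝ × ℝ → ℝ)
    (hf : ∀ x : ℝ × ℝ, f x = m * x.1 ^ 2 + k * x.1 * x.2 + n * x.2 ^ 2)
    (s : (ℝ × ℝ) →ₗ[ℝ] (ℝ × ℝ) →ₗ[ℝ] ℝ × ℝ)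
    (hsint : ∀ x y : ℝ × ℝ, IsIntVec x → IsIntVec y → IsIntVec (s x y))
    (hsnorm : ∀ x y : ℝ × ℝ, f (s x y) = f x * f y) :
    (∃ m' : ℤ, (m' : ℝ) = m) ∧ (∃ k' : ℤ, (k' : ℝ) = k) ∧ (∃ n' : ℤ, (n' : ℝ) = n) ∧
    ∀ x : ℝ × ℝ, IsIntVec x → ∃ z : ℤ, f x = (z : ℝ) := by
  have h10 : IsIntVec ((1 : ℝ), (0 : ℝ)) := ⟨1, 0, by norm_num⟩
  have h01 : IsIntVec ((0 : ℝ), (1 : ℝ)) := ⟨0, 1, by norm_num⟩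
  have h11 : IsIntVec ((1 : ℝ), (1 : ℝ)) := ⟨1, 1, by norm_num⟩
  have fe1 : f (1, 0) = m := by rw [hf]; norm_num
  have fe2 : f (0, 1) = n := by rw [hf]; norm_num
  have fe3 : f (1, 1) = m + k + n := by rw [hf]; norm_num
  have key : ∀ x : ℝ × ℝ, IsIntVec x → ∃ z : ℤ, f x = (z : ℝ) := by
    intro x hx
    obtain ⟨a, c, hac⟩ := hsint x (1, 0) hx h10
    obtain ⟨b, d, hbd⟩ := hsint x (0, 1) hx h01
    set A : ℝ := (a : ℝ)
    set B : ℝ := (b : ℝ)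
    set C : ℝ := (c : ℝ)
    set D : ℝ := (d : ℝ)
    -- value of s x (1,1)
    have hsum : ((1 : ℝ), (1 : ℝ)) = ((1 : ℝ), (0 : ℝ)) + ((0 : ℝ), (1 : ℝ)) := by
      simp [Prod.ext_iff]
    have h11' : s x (1, 1) = (A + B, C + D) := by
      rw [hsum, map_add, hac, hbd]
      simp [Prod.ext_iff]
    -- the three norm equations
    have e1 : m * A ^ 2 + k * A * C + n * C ^ 2 = f x * m := by
      have h := hsnorm x (1, 0)
      rw [hac, fe1, hf] at h
      simpa using h
    have e2 : m * B ^ 2 + k * B * D + n * D ^ 2 = f x * n := by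
      have h := hsnorm x (0, 1)
      rw [hbd, fe2, hf] at h
      simpa using h
    have e3 : m * (A + B) ^ 2 + k * (A + B) * (C + D) + n * (C + D) ^ 2
        = f x * (m + k + n) := by
      have h := hsnorm x (1, 1)
      rw [h11', fe3, hf] at h
      simpa using h
    have e4 : 2 * m * A * B + k * (A * D + B * C) + 2 * n * C * D = f x * k := by
      linear_combination e3 - e1 - e2
    -- discriminant comparison
    have key2 : f x ^ 2 * (k ^ 2 - 4 * m * n)
        = (A * D - B * C) ^ 2 * (k ^ 2 - 4 * m * n) := by
      calc f x ^ 2 * (k ^ 2 - 4 * m * n)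
          = (f x * k) ^ 2 - 4 * (f x * m) * (f x * n) := by ring
        _ = (2 * m * A * B + k * (A * D + B * C) + 2 * n * C * D) ^ 2
            - 4 * (m * A ^ 2 + k * A * C + n * C ^ 2)
              * (m * B ^ 2 + k * B * D + n * D ^ 2) := by rw [← e4, ← e1, ← e2]
        _ = (A * D - B * C) ^ 2 * (k ^ 2 - 4 * m * n) := by ring
    have hsq : f x ^ 2 = (A * D - B * C) ^ 2 := mul_right_cancel₀ hnd key2
    have hfac : (f x - (A * D - B * C)) * (f x + (A * D - B * C)) = 0 := by
      linear_combination hsq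
    rcases mul_eq_zero.mp hfac with h | h
    · exact ⟨a * d - b * c, by push_cast; linarith⟩
    · exact ⟨-(a * d - b * c), by push_cast; linarith⟩
  obtain ⟨z1, hz1⟩ := key (1, 0) h10
  obtain ⟨z2, hz2⟩ := key (0, 1) h01
  obtain ⟨z3, hz3⟩ := key (1, 1) h11
  rw [fe1] at hz1
  rw [fe2] at hz2
  rw [fe3] at hz3
  exact ⟨⟨z1, hz1.symm⟩, ⟨z3 - z1 - z2, by push_cast; linarith⟩,
    ⟨z2, hz2.symm⟩, key⟩
end

section
/- Let m, k, n, p, q be arbitrary integers and set r = m·p² + k·p·q + n·q². Define the quadratic form f₁(x) = r·m·x₁² + r·k·x₁x₂ + r·n·x₂² on ℝ² and the bilinear map s₁ : ℝ² × ℝ² → ℝ² by s₁(x,y) = ( (mp+kq)·x₁y₁ + nq·(x₁y₂ + x₂y₁) − np·x₂y₂ , −mq·x₁y₁ + mp·(x₁y₂ + x₂y₁) + (nq+kp)·x₂y₂ ). Then for all x, y ∈ ℝ²: f₁(s₁(x,y)) = f₁(x)·f₁(y); moreover s₁ maps ℤ² × ℤ² into ℤ², and for every y ∈ ℝ² the linear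 map x ↦ s₁(x,y) has determinant f₁(y), and for every x ∈ ℝ² the linear map y ↦ s₁(x,y) has determinant f₁(x) (so s₁ is an integer normed pairing of type (+,+) with respect to f₁). -/
/-- The determinant of a (linear) map `T : ℝ² → ℝ²`, computed from the images of
the standard basis vectors. -/
noncomputable def det2 (T : ℝ × ℝ → ℝ × ℝ) : ℝ :=
  (T (1, 0)).1 * (T (0, 1)).2 - (T (0, 1)).1 * (T (1, 0)).2

/-- For arbitrary integers `m, k, n, p, q` and `r = m p² + k p q + n q²`, the pairing
`s₁` is an integer normed pairing of type `(+,+)` with respect to the quadratic form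
`f₁ = (rm, rk, rn)`. -/
theorem stmt1 (m k n p q r : ℤ) (hr : r = m * p ^ 2 + k * p * q + n * q ^ 2)
    (f : ℝ × ℝ → ℝ)
    (hf : ∀ x : ℝ × ℝ, f x = ((r * m : ℤ) : ℝ) * x.1 ^ 2 + ((r * k : ℤ) : ℝ) * x.1 * x.2
      + ((r * n : ℤ) : ℝ) * x.2 ^ 2)
    (s : ℝ × ℝ → ℝ × ℝ → ℝ × ℝ)
    (hs : ∀ x y : ℝ × ℝ, s x y =
      (((m * p + k * q : ℤ) : ℝ) * (x.1 * y.1) + ((n * q : ℤ) : ℝ) * (x.1 * y.2 + x.2 * y.1)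
          - ((n * p : ℤ) : ℝ) * (x.2 * y.2),
        -((m * q : ℤ) : ℝ) * (x.1 * y.1) + ((m * p : ℤ) : ℝ) * (x.1 * y.2 + x.2 * y.1)
          + ((n * q + k * p : ℤ) : ℝ) * (x.2 * y.2))) :
    (∀ x y : ℝ × ℝ, f (s x y) = f x * f y) ∧
    (∀ x y : ℝ × ℝ, IsIntVec x → IsIntVec y → IsIntVec (s x y)) ∧
    (∀ y : ℝ × ℝ, det2 (fun x => s x y) = f y) ∧
    (∀ x : ℝ × ℝ, det2 (fun y => s x y) = f x) := by
  have hrr : (r:ℝ) = (m:ℝ)*(p:ℝ)^2 + (k:ℝ)*(p:ℝ)*(q:ℝ) + (n:ℝ)*(q:ℝ)^2 := by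
    exact_mod_cast congrArg (Int.cast : ℤ → ℝ) hr
  refine ⟨?_, ?_, ?_, ?_⟩
  · intro x y
    rw [hf, hf, hf, hs]
    push_cast
    rw [hrr]
    ring
  · rintro x y ⟨a, b, rfl⟩ ⟨c, d, rfl⟩
    rw [hs]
    exact ⟨(m*p+k*q)*(a*c) + n*q*(a*d+b*c) - n*p*(b*d),
      -(m*q)*(a*c) + m*p*(a*d+b*c) + (n*q+k*p)*(b*d), by push_cast; ring⟩
  · intro y
    simp only [det2, hs, hf]
    push_cast
    rw [hrr]
    ring
  · intro x
    simp only [det2, hs, hf]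
    push_cast
    rw [hrr]
    ring
end

section
/- Let a, b, c, d be arbitrary integers. Define the quadratic form f₄(x) = (a² − cd)·x₁² + (ac − bd)·x₁x₂ + (c² − ab)·x₂² on ℝ² and the bilinear map s₄ : ℝ² × ℝ² → ℝ² by s₄(x,y) = ( a·x₁y₁ + c·(x₁y₂ + x₂y₁) + b·x₂y₂ , −d·x₁y₁ − a·(x₁y₂ + x₂y₁) − c·x₂y₂ ). Then for all x, y ∈ ℝ²: f₄(s₄(x,y)) = f₄(x)·f₄(y); moreover s₄ maps ℤ² × ℤ² into ℤ², for every y ∈ ℝ² the linear map x ↦ s₄(x,y) has determinant −f₄(y), and for every x ∈ ℝ² the linear map y ↦ s₄(x,y) has determinant −f₄(x) (so s₄ is an integer normed pairing of type (−,−) with respect to f₄). -/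
/-- For arbitrary integers `a, b, c, d`, the pairing `s₄` is an integer normed
pairing of type `(−,−)` with respect to the quadratic form
`f₄ = (a² − cd, ac − bd, c² − ab)`. -/
theorem stmt2 (a b c d : ℤ)
    (f : ℝ × ℝ → ℝ)
    (hf : ∀ x : ℝ × ℝ, f x = ((a ^ 2 - c * d : ℤ) : ℝ) * x.1 ^ 2
      + ((a * c - b * d : ℤ) : ℝ) * x.1 * x.2 + ((c ^ 2 - a * b : ℤ) : ℝ) * x.2 ^ 2)
    (s : ℝ × ℝ → ℝ × ℝ → ℝ × ℝ)
    (hs : ∀ x y : ℝ × ℝ, s x y =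
      ((a : ℝ) * (x.1 * y.1) + (c : ℝ) * (x.1 * y.2 + x.2 * y.1) + (b : ℝ) * (x.2 * y.2),
        -(d : ℝ) * (x.1 * y.1) - (a : ℝ) * (x.1 * y.2 + x.2 * y.1) - (c : ℝ) * (x.2 * y.2))) :
    (∀ x y : ℝ × ℝ, f (s x y) = f x * f y) ∧
    (∀ x y : ℝ × ℝ, IsIntVec x → IsIntVec y → IsIntVec (s x y)) ∧
    (∀ y : ℝ × ℝ, det2 (fun x => s x y) = -f y) ∧
    (∀ x : ℝ × ℝ, det2 (fun y => s x y) = -f x) := by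
  refine ⟨?_, ?_, ?_, ?_⟩
  · intro x y
    simp only [hf, hs]
    push_cast
    ring
  · rintro x y ⟨x1, x2, rfl⟩ ⟨y1, y2, rfl⟩
    refine ⟨a * (x1 * y1) + c * (x1 * y2 + x2 * y1) + b * (x2 * y2),
      -d * (x1 * y1) - a * (x1 * y2 + x2 * y1) - c * (x2 * y2), ?_⟩
    rw [hs]
    push_cast
    ring_nf
  · intro y
    simp only [det2, hf, hs]
    push_cast
    ring
  · intro x
    simp only [det2, hf, hs]
    push_cast
    ring
end

section
/- Let s : ℝ² × ℝ² → ℝ² be an ℝ-bilinear map that is commutative (s(x,y) = s(y,x) for all x, y) and traceless (for every x ∈ ℝ², the linear operator y ↦ s(x,y) has trace zero). Then there exists a quadratic form f on ℝ² such that s(x, s(x,y)) = f(x)·y for all x, y ∈ ℝ², and this f satisfies f(s(x,y)) = f(x)·f(y) for all x, y ∈ ℝ²; moreover, for every x ∈ ℝ² the determinant of the linear map y ↦ s(x,y) equals −f(x), and for every y ∈ ℝ² the determinant of the linear map x ↦ s(x,y) equals −f(y). -/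
/-- Any commutative traceless bilinear pairing `s : ℝ² × ℝ² → ℝ²` is a normed
pairing of type `(−,−)` with respect to a certain quadratic form `f`, which is
recovered from the relation `s(x, s(x,y)) = f(x)·y`. -/
theorem stmt3 (s : (ℝ × ℝ) →ₗ[ℝ] (ℝ × ℝ) →ₗ[ℝ] ℝ × ℝ)
    (hcomm : ∀ x y : ℝ × ℝ, s x y = s y x)
    (htraceless : ∀ x : ℝ × ℝ, (s x (1, 0)).1 + (s x (0, 1)).2 = 0) :
    ∃ m k n : ℝ,
      (∀ x y : ℝ × ℝ,
        s x (s x y) = (m * x.1 ^ 2 + k * x.1 * x.2 + n * x.2 ^ 2) • y) ∧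
      (∀ x y : ℝ × ℝ,
        (m * (s x y).1 ^ 2 + k * (s x y).1 * (s x y).2 + n * (s x y).2 ^ 2)
          = (m * x.1 ^ 2 + k * x.1 * x.2 + n * x.2 ^ 2)
            * (m * y.1 ^ 2 + k * y.1 * y.2 + n * y.2 ^ 2)) ∧
      (∀ x : ℝ × ℝ, det2 (fun y => s x y) = -(m * x.1 ^ 2 + k * x.1 * x.2 + n * x.2 ^ 2)) ∧
      (∀ y : ℝ × ℝ, det2 (fun x => s x y) = -(m * y.1 ^ 2 + k * y.1 * y.2 + n * y.2 ^ 2)) := by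
  set a : ℝ := (s (1, 0) (1, 0)).1 with ha
  set b : ℝ := (s (1, 0) (1, 0)).2 with hb
  set c : ℝ := (s (1, 0) (0, 1)).1 with hc
  set e : ℝ := (s (0, 1) (0, 1)).1 with he
  have h1 := htraceless (1, 0)
  have h2 := htraceless (0, 1)
  have hC2 : (s (1, 0) (0, 1)).2 = -a := by linarith
  have hE2 : (s (0, 1) (0, 1)).2 = -c := by
    have := hcomm (0, 1) (1, 0)
    rw [this] at h2; linarith
  have key : ∀ x y : ℝ × ℝ,
      s x y = ((x.1 * y.1) * a + (x.1 * y.2 + x.2 * y.1) * c + (x.2 * y.2) * e,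
               (x.1 * y.1) * b + (x.1 * y.2 + x.2 * y.1) * (-a) + (x.2 * y.2) * (-c)) := by
    intro x y
    have hx : x = x.1 • ((1 : ℝ), (0 : ℝ)) + x.2 • ((0 : ℝ), (1 : ℝ)) := by
      ext <;> simp
    have hy : y = y.1 • ((1 : ℝ), (0 : ℝ)) + y.2 • ((0 : ℝ), (1 : ℝ)) := by
      ext <;> simp
    rw [hx, hy]
    simp only [map_add, map_smul, LinearMap.add_apply, LinearMap.smul_apply]
    rw [hcomm (0, 1) (1, 0)]
    ext
    · simp [← ha, ← hc, ← he]; ring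
    · simp [← hb, hC2, hE2]; ring
  refine ⟨a ^ 2 + b * c, a * c + b * e, c ^ 2 - a * e, ?_, ?_, ?_, ?_⟩
  · intro x y
    rw [key x (s x y), key x y]
    ext <;> simp <;> ring
  · intro x y
    rw [key x y]
    simp only
    ring
  · intro x
    simp only [det2, key x (1, 0), key x (0, 1)]
    ring
  · intro y
    simp only [det2, key (1, 0) y, key (0, 1) y]
    ring
end

section
/- Let f be a nondegenerate quadratic form on ℝ² and let s : ℝ² × ℝ² → ℝ² be an integer normed pairing with respect to f of type (−,−), i.e. s is ℝ-bilinear, s(ℤ² × ℤ²) ⊆ ℤ², f(s(x,y)) = f(x)·f(y) for all x, y, and for every y ∈ ℝ² the determinant of the linear map x ↦ s(x,y) equals −f(y) while for every x ∈ ℝ² the determinant of y ↦ s(x,y) equals −f(x). Then s is commutative (s(x,y) = s(y,x) for all x, y ∈ ℝ²) and traceless (for every x ∈ ℝ² the linear operator y ↦ s(x,y) has trace zero). -/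
/-- Key algebra: a similitude of a nondegenerate binary form with det equal to
minus the multiplier is traceless. -/
lemma trace_aux (m k n c p q r t : ℝ) (hc : c ≠ 0) (hnd : k ^ 2 - 4 * m * n ≠ 0)
    (h1 : m * p ^ 2 + k * p * r + n * r ^ 2 = c * m)
    (h2 : m * q ^ 2 + k * q * t + n * t ^ 2 = c * n)
    (h3 : 2 * (m * p * q) + k * (p * t + q * r) + 2 * (n * r * t) = c * k)
    (h4 : p * t - q * r = -c) :
    p + t = 0 := by
  have hm : c * (m * (p + t)) = 0 := by
    linear_combination (-t) * h1 + (r / 2) * h3 + (m * p + k * r / 2) * h4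
  have hn : c * (n * (p + t)) = 0 := by
    linear_combination (-p) * h2 + (q / 2) * h3 + (k * q / 2 + n * t) * h4
  have hk : c * (k * (p + t)) = 0 := by
    linear_combination q * h1 + r * h2 - ((p + t) / 2) * h3
      + (k * (p + t) / 2 + n * r + m * q) * h4
  have hm' := (mul_eq_zero.1 hm).resolve_left hc
  have hk' := (mul_eq_zero.1 hk).resolve_left hc
  have hz : (p + t) * (k ^ 2 - 4 * m * n) = 0 := by
    linear_combination k * hk' - 4 * n * hm'
  exact (mul_eq_zero.1 hz).resolve_right hnd

/-- If `(m t² + k t + n)(a t + b)` vanishes for all `t` and the form is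
nondegenerate, then `a = b = 0`. -/
lemma coeff_aux (m k n a b : ℝ) (hnd : k ^ 2 - 4 * m * n ≠ 0)
    (hQ : ∀ t : ℝ, (m * t ^ 2 + k * t + n) * (a * t + b) = 0) :
    a = 0 ∧ b = 0 := by
  have h0 : n * b = 0 := by linear_combination hQ 0
  have hc2 : m * b + k * a = 0 := by
    linear_combination (1/2) * hQ 1 + (1/2) * hQ (-1) - hQ 0
  have hc3 : m * a = 0 := by
    linear_combination (1/6) * hQ 2 + (1/2) * hQ 0 - (1/2) * hQ 1 - (1/6) * hQ (-1)
  have hc1 : k * b + n * a = 0 := by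
    linear_combination hQ 1 - hc3 - hc2 - h0
  have ha : a * (k ^ 2 - 4 * m * n) = 0 := by
    linear_combination k * hc2 - m * hc1 - 3 * n * hc3
  have hb : b * (k ^ 2 - 4 * m * n) = 0 := by
    linear_combination k * hc1 - n * hc2 - 3 * m * h0
  exact ⟨(mul_eq_zero.1 ha).resolve_right hnd, (mul_eq_zero.1 hb).resolve_right hnd⟩

/-- Any integer normed pairing of type `(−,−)` with respect to a nondegenerate
quadratic form is commutative and traceless. -/
theorem stmt4 (m k n : ℝ) (hnd : k ^ 2 - 4 * m * n ≠ 0)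
    (f : ℝ × ℝ → ℝ)
    (hf : ∀ x : ℝ × ℝ, f x = m * x.1 ^ 2 + k * x.1 * x.2 + n * x.2 ^ 2)
    (s : (ℝ × ℝ) →ₗ[ℝ] (ℝ × ℝ) →ₗ[ℝ] ℝ × ℝ)
    (hsint : ∀ x y : ℝ × ℝ, IsIntVec x → IsIntVec y → IsIntVec (s x y))
    (hsnorm : ∀ x y : ℝ × ℝ, f (s x y) = f x * f y)
    (hdet1 : ∀ y : ℝ × ℝ, det2 (fun x => s x y) = -f y)
    (hdet2 : ∀ x : ℝ × ℝ, det2 (fun y => s x y) = -f x) :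
    (∀ x y : ℝ × ℝ, s x y = s y x) ∧
    (∀ x : ℝ × ℝ, (s x (1, 0)).1 + (s x (0, 1)).2 = 0) := by
  have honeone : ((1:ℝ), (1:ℝ)) = ((1:ℝ), (0:ℝ)) + ((0:ℝ), (1:ℝ)) := by
    simp [Prod.ext_iff]
  -- second-argument trace is zero whenever f x ≠ 0
  have key2 : ∀ x : ℝ × ℝ, f x ≠ 0 → (s x (1, 0)).1 + (s x (0, 1)).2 = 0 := by
    intro x hx
    have hadd : s x (1, 1) = s x (1, 0) + s x (0, 1) := by
      rw [honeone, map_add]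
    have h1 : m * (s x (1, 0)).1 ^ 2 + k * (s x (1, 0)).1 * (s x (1, 0)).2
        + n * (s x (1, 0)).2 ^ 2 = f x * m := by
      have h := hsnorm x (1, 0)
      rw [hf (s x (1, 0)), hf (1, 0)] at h
      simpa using h
    have h2 : m * (s x (0, 1)).1 ^ 2 + k * (s x (0, 1)).1 * (s x (0, 1)).2
        + n * (s x (0, 1)).2 ^ 2 = f x * n := by
      have h := hsnorm x (0, 1)
      rw [hf (s x (0, 1)), hf (0, 1)] at h
      simpa using h
    have h3 : 2 * (m * (s x (1, 0)).1 * (s x (0, 1)).1)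
        + k * ((s x (1, 0)).1 * (s x (0, 1)).2 + (s x (0, 1)).1 * (s x (1, 0)).2)
        + 2 * (n * (s x (1, 0)).2 * (s x (0, 1)).2) = f x * k := by
      have h := hsnorm x (1, 1)
      rw [hadd, hf (s x (1, 0) + s x (0, 1)), hf (1, 1)] at h
      simp only [Prod.fst_add, Prod.snd_add] at h
      norm_num at h
      linear_combination h - h1 - h2
    have h4 : (s x (1, 0)).1 * (s x (0, 1)).2 - (s x (0, 1)).1 * (s x (1, 0)).2
        = -(f x) := by
      have h := hdet2 x
      simpa [det2] using h
    exact trace_aux m k n (f x) (s x (1, 0)).1 (s x (0, 1)).1 (s x (1, 0)).2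
      (s x (0, 1)).2 hx hnd h1 h2 h3 h4
  -- first-argument trace is zero whenever f y ≠ 0
  have key1 : ∀ y : ℝ × ℝ, f y ≠ 0 → (s (1, 0) y).1 + (s (0, 1) y).2 = 0 := by
    intro y hy
    have hadd : s (1, 1) y = s (1, 0) y + s (0, 1) y := by
      rw [honeone, map_add, LinearMap.add_apply]
    have h1 : m * (s (1, 0) y).1 ^ 2 + k * (s (1, 0) y).1 * (s (1, 0) y).2
        + n * (s (1, 0) y).2 ^ 2 = f y * m := by
      have h := hsnorm (1, 0) y
      rw [hf (s (1, 0) y), hf (1, 0)] at h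
      norm_num at h
      linear_combination h
    have h2 : m * (s (0, 1) y).1 ^ 2 + k * (s (0, 1) y).1 * (s (0, 1) y).2
        + n * (s (0, 1) y).2 ^ 2 = f y * n := by
      have h := hsnorm (0, 1) y
      rw [hf (s (0, 1) y), hf (0, 1)] at h
      norm_num at h
      linear_combination h
    have h3 : 2 * (m * (s (1, 0) y).1 * (s (0, 1) y).1)
        + k * ((s (1, 0) y).1 * (s (0, 1) y).2 + (s (0, 1) y).1 * (s (1, 0) y).2)
        + 2 * (n * (s (1, 0) y).2 * (s (0, 1) y).2) = f y * k := by
      have h := hsnorm (1, 1) y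
      rw [hadd, hf (s (1, 0) y + s (0, 1) y), hf (1, 1)] at h
      simp only [Prod.fst_add, Prod.snd_add] at h
      norm_num at h
      linear_combination h - h1 - h2
    have h4 : (s (1, 0) y).1 * (s (0, 1) y).2 - (s (0, 1) y).1 * (s (1, 0) y).2
        = -(f y) := by
      have h := hdet1 y
      simpa [det2] using h
    exact trace_aux m k n (f y) (s (1, 0) y).1 (s (0, 1) y).1 (s (1, 0) y).2
      (s (0, 1) y).2 hy hnd h1 h2 h3 h4
  -- bilinear expansions
  have hbasis : ∀ z : ℝ × ℝ, z = z.1 • ((1:ℝ), (0:ℝ)) + z.2 • ((0:ℝ), (1:ℝ)) := by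
    intro z
    ext <;> simp
  have hx_expand : ∀ x z : ℝ × ℝ, s x z = x.1 • s (1, 0) z + x.2 • s (0, 1) z := by
    intro x z
    conv_lhs => rw [hbasis x]
    rw [map_add, map_smul, map_smul, LinearMap.add_apply, LinearMap.smul_apply,
      LinearMap.smul_apply]
  have hy_expand : ∀ x z : ℝ × ℝ, s x z = z.1 • s x (1, 0) + z.2 • s x (0, 1) := by
    intro x z
    conv_lhs => rw [hbasis z]
    rw [map_add, map_smul, map_smul]
  set a := (s (1, 0) (1, 0)).1 + (s (1, 0) (0, 1)).2 with ha_def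
  set b := (s (0, 1) (1, 0)).1 + (s (0, 1) (0, 1)).2 with hb_def
  set a' := (s (1, 0) (1, 0)).1 + (s (0, 1) (1, 0)).2 with ha'_def
  set b' := (s (1, 0) (0, 1)).1 + (s (0, 1) (0, 1)).2 with hb'_def
  have hft : ∀ t : ℝ, f (t, 1) = m * t ^ 2 + k * t + n := by
    intro t; rw [hf]; ring
  -- the second-argument trace functional
  have hl2 : ∀ t : ℝ, (s (t, 1) (1, 0)).1 + (s (t, 1) (0, 1)).2 = a * t + b := by
    intro t
    rw [hx_expand (t, 1) (1, 0), hx_expand (t, 1) (0, 1)]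
    simp [ha_def, hb_def]
    ring
  have hl1 : ∀ t : ℝ, (s (1, 0) (t, 1)).1 + (s (0, 1) (t, 1)).2 = a' * t + b' := by
    intro t
    rw [hy_expand (1, 0) (t, 1), hy_expand (0, 1) (t, 1)]
    simp [ha'_def, hb'_def]
    ring
  have hab : a = 0 ∧ b = 0 := by
    apply coeff_aux m k n a b hnd
    intro t
    by_cases h : f (t, 1) = 0
    · have : m * t ^ 2 + k * t + n = 0 := by rw [← hft t]; exact h
      rw [this, zero_mul]
    · have h0 := key2 (t, 1) h
      rw [hl2 t] at h0
      rw [← hft t]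
      rw [h0, mul_zero]
  have hab' : a' = 0 ∧ b' = 0 := by
    apply coeff_aux m k n a' b' hnd
    intro t
    by_cases h : f (t, 1) = 0
    · have : m * t ^ 2 + k * t + n = 0 := by rw [← hft t]; exact h
      rw [this, zero_mul]
    · have h0 := key1 (t, 1) h
      rw [hl1 t] at h0
      rw [← hft t]
      rw [h0, mul_zero]
  obtain ⟨ha0, hb0⟩ := hab
  obtain ⟨ha'0, hb'0⟩ := hab'
  -- symmetry on basis vectors
  have h12 : s (1, 0) (0, 1) = s (0, 1) (1, 0) := by
    have e1 : (s (1, 0) (0, 1)).1 = (s (0, 1) (1, 0)).1 := by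
      have := hb0; have := hb'0
      rw [hb_def] at hb0; rw [hb'_def] at hb'0
      linarith
    have e2 : (s (1, 0) (0, 1)).2 = (s (0, 1) (1, 0)).2 := by
      rw [ha_def] at ha0; rw [ha'_def] at ha'0
      linarith
    exact Prod.ext e1 e2
  constructor
  · intro x y
    rw [hx_expand x y, hx_expand y x, hy_expand (1, 0) y, hy_expand (0, 1) y,
      hy_expand (1, 0) x, hy_expand (0, 1) x, h12]
    ext <;> simp <;> ring
  · intro x
    rw [hx_expand x (1, 0), hx_expand x (0, 1)]
    rw [ha_def] at ha0; rw [hb_def] at hb0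
    simp
    linear_combination x.1 * ha0 + x.2 * hb0
end

section
/- Let f be a positive definite integer quadratic form on ℝ² (f(x) = m·x₁² + k·x₁x₂ + n·x₂² with m, k, n ∈ ℤ and f(x) > 0 for all x ≠ 0) that admits an integer normed pairing. Then there exists an ℝ-linear isomorphism φ : ℝ² → ℂ which is orientation preserving (the determinant of the matrix of φ with respect to the standard basis of ℝ² and the basis (1, i) of ℂ is positive) such that f(x) = |φ(x)|² for all x ∈ ℝ², and the lattice L = φ(ℤ²) is stable under at least one of the four operations σ₁(z,w) = z·w, σ₂(z,w) = conj(z)·w, σ₃(z,w) = z·conj(w), σ₄(z,w) = conj(z·w), meaning σ_k(z,w) ∈ L for all z, w ∈ L. -/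
open Complex ComplexConjugate

namespace Complex

lemma eq_I_mul_or_eq_neg_I_mul_of_normSq_eq {u v : ℂ} (hn : normSq u = normSq v)
    (hre : (u * conj v).re = 0) : u = I * v ∨ u = -(I * v) := by
  rcases eq_or_ne v 0 with rfl | hv
  · simp_all
  have ht : normSq (u / v) = 1 := by
    rw [normSq_div, hn, div_self (normSq_pos.mpr hv).ne']
  have hre' : (u / v).re = 0 := by
    rw [div_eq_mul_inv, inv_def, ← mul_assoc, re_mul_ofReal, hre, zero_mul]
  have him : (u / v).im = 1 ∨ (u / v).im = -1 := by
    rw [normSq_apply, hre', zero_mul, zero_add] at ht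
    exact mul_self_eq_one_iff.mp ht
  rw [← div_mul_cancel₀ u hv]
  rcases him with h | h
  · exact .inl (by congr 1; exact Complex.ext hre' (by simp [h]))
  · exact .inr (by rw [← neg_mul]; congr 1; exact Complex.ext (by simp [hre']) (by simp [h]))

lemma re_mul_conj_eq_zero_of_normSq_add {u v : ℂ}
    (h : normSq (u + v) = normSq u + normSq v) : (u * conj v).re = 0 := by
  rw [normSq_add] at h
  linarith

end Complex

namespace LinearMap

lemma complex_apply (T : ℂ →ₗ[ℝ] ℂ) (z : ℂ) : T z = z.re * T 1 + z.im * T I := by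
  have hsmul (x : ℝ) (w : ℂ) : T (x * w) = x * T w := by rw [← real_smul, map_smul, real_smul]
  conv_lhs => rw [← re_add_im z, ← mul_one (z.re : ℂ)]
  rw [map_add, hsmul, hsmul]

variable {T : ℂ →ₗ[ℝ] ℂ} {r : ℝ}

lemma apply_I_eq_or_of_normSq_map (hT : ∀ z, normSq (T z) = r * normSq z) :
    T I = I * T 1 ∨ T I = -(I * T 1) := by
  refine eq_I_mul_or_eq_neg_I_mul_of_normSq_eq (by simp [hT]) ?_
  rw [← conj_re, map_mul, conj_conj, mul_comm]
  apply re_mul_conj_eq_zero_of_normSq_add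
  simp [← map_add, hT, normSq_apply]
  ring

lemma apply_eq_mul_of_apply_I (h : T I = I * T 1) (z : ℂ) : T z = T 1 * z := by
  rw [T.complex_apply, h]
  conv_rhs => rw [← re_add_im z]
  ring

lemma apply_eq_mul_conj_of_apply_I (h : T I = -(I * T 1)) (z : ℂ) : T z = T 1 * conj z := by
  rw [T.complex_apply, h]
  conv_rhs => rw [← re_add_im z]
  simp only [map_add, map_mul, conj_ofReal, conj_I]
  ring

lemma apply_eq_mul_or_apply_eq_mul_conj (hT : ∀ z, normSq (T z) = r * normSq z) :
    (∀ z, T z = T 1 * z) ∨ (∀ z, T z = T 1 * conj z) :=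
  (apply_I_eq_or_of_normSq_map hT).imp apply_eq_mul_of_apply_I apply_eq_mul_conj_of_apply_I

end LinearMap

lemma AddMonoidHom.forall_eq_or_forall_eq_neg {M N : Type*} [AddCommGroup M] [AddCommGroup N]
    [IsAddTorsionFree N] {F G : M →+ N} (h : ∀ x, F x = G x ∨ F x = -G x) :
    (∀ x, F x = G x) ∨ ∀ x, F x = -G x := by
  by_contra! ⟨⟨x₀, hx₀⟩, ⟨x₁, hx₁⟩⟩
  have h₀ : F x₀ = -G x₀ := (h x₀).resolve_left hx₀
  have h₁ : F x₁ = G x₁ := (h x₁).resolve_right hx₁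
  rcases h (x₀ + x₁) with h₂ | h₂ <;> rw [map_add, map_add, h₀, h₁] at h₂
  · have : G x₀ = 0 := self_eq_neg.mp (add_right_cancel h₂).symm
    exact hx₀ (by rw [h₀, this, neg_zero])
  · have : G x₁ = 0 := self_eq_neg.mp (add_left_cancel (h₂.trans (neg_add _ _)))
    exact hx₁ (by rw [h₁, this, neg_zero])

namespace Complex

-- `twistedMul i` is `σ_{i+1}`.
def twistedMul : Fin 4 → ℂ → ℂ → ℂ
  | 0, z, w => z * w
  | 1, z, w => conj z * w
  | 2, z, w => z * conj w
  | 3, z, w => conj (z * w)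

variable {B : ℂ →ₗ[ℝ] ℂ →ₗ[ℝ] ℂ}

lemma bilin_apply_eq_mul_or_apply_eq_mul_conj (hB : ∀ z w, normSq (B z w) = normSq z * normSq w) :
    (∀ z w, B z w = B z 1 * w) ∨ (∀ z w, B z w = B z 1 * conj w) := by
  have hI (z : ℂ) : B z I = I * B z 1 ∨ B z I = -(I * B z 1) :=
    (B z).apply_I_eq_or_of_normSq_map (r := normSq z) fun w => by rw [hB, mul_comm]
  rcases AddMonoidHom.forall_eq_or_forall_eq_neg (F := (B.flip I).toAddMonoidHom)
    (G := (AddMonoidHom.mulLeft I).comp (B.flip 1).toAddMonoidHom) hI with h | h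
  · exact .inl fun z => (B z).apply_eq_mul_of_apply_I (h z)
  · exact .inr fun z => (B z).apply_eq_mul_conj_of_apply_I (h z)

theorem exists_eq_mul_twistedMul (hB : ∀ z w, normSq (B z w) = normSq z * normSq w) :
    ∃ i c, normSq c = 1 ∧ ∀ z w, B z w = c * twistedMul i z w := by
  have hc : normSq (B 1 1) = 1 := by simp [hB]
  rcases (B.flip 1).apply_eq_mul_or_apply_eq_mul_conj (r := 1) (fun z => by simp [hB]) with
    hP | hP <;> rcases bilin_apply_eq_mul_or_apply_eq_mul_conj hB with hQ | hQ <;>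
    simp only [LinearMap.flip_apply] at hP
  · exact ⟨0, B 1 1, hc, fun z w => by rw [hQ, hP, mul_assoc]; rfl⟩
  · exact ⟨2, B 1 1, hc, fun z w => by rw [hQ, hP, mul_assoc]; rfl⟩
  · exact ⟨1, B 1 1, hc, fun z w => by rw [hQ, hP, mul_assoc]; rfl⟩
  · exact ⟨3, B 1 1, hc, fun z w => by rw [hQ, hP, mul_assoc, ← map_mul]; rfl⟩

lemma exists_normSq_eq_one_mul_twistedMul (i : Fin 4) {c : ℂ} (hc : normSq c = 1) :
    ∃ u, normSq u = 1 ∧ ∀ z w, u * (c * twistedMul i z w) = twistedMul i (u * z) (u * w) := by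
  fin_cases i
  · exact ⟨c, hc, fun z w => by simp only [twistedMul]; ring⟩
  · refine ⟨conj c, by rwa [normSq_conj], fun z w => ?_⟩
    simp only [twistedMul, map_mul, conj_conj]
    ring
  · refine ⟨conj c, by rwa [normSq_conj], fun z w => ?_⟩
    simp only [twistedMul, map_mul, conj_conj]
    ring
  -- `u = conj v` for a cube root `v` of `c`, so that `u * c = conj u ^ 2`
  obtain ⟨v, hv⟩ := IsAlgClosed.exists_pow_nat_eq c three_pos
  have hv1 : normSq v = 1 := by
    rwa [← hv, map_pow, pow_eq_one_iff_of_nonneg (normSq_nonneg v) three_ne_zero] at hc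
  have hv' : conj v * v = 1 := by rw [mul_comm, mul_conj, hv1, ofReal_one]
  refine ⟨conj v, by rwa [normSq_conj], fun z w => ?_⟩
  simp only [twistedMul, map_mul, conj_conj, ← hv]
  linear_combination v ^ 2 * conj z * conj w * hv'

lemma twistedMul_mem_image_mul_left {L : Set ℂ} {S : ℂ → ℂ → ℂ} {i : Fin 4} {u : ℂ}
    (hL : ∀ z ∈ L, ∀ w ∈ L, S z w ∈ L) (hu : ∀ z w, u * S z w = twistedMul i (u * z) (u * w)) :
    ∀ z ∈ (u * ·) '' L, ∀ w ∈ (u * ·) '' L, twistedMul i z w ∈ (u * ·) '' L := by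
  rintro _ ⟨z, hz, rfl⟩ _ ⟨w, hw, rfl⟩
  exact ⟨S z w, hL z hz w hw, hu z w⟩

lemma mul_re_mul_im_sub (u a b : ℂ) :
    (u * a).re * (u * b).im - (u * b).re * (u * a).im = normSq u * (a.re * b.im - b.re * a.im) := by
  simp only [mul_re, mul_im, normSq_apply]
  ring

end Complex

lemma exists_linearEquiv_complex_normSq_eq (a b c : ℝ)
    (hpos : ∀ x : ℝ × ℝ, x ≠ 0 → 0 < a * x.1 ^ 2 + b * x.1 * x.2 + c * x.2 ^ 2) :
    ∃ φ : (ℝ × ℝ) ≃ₗ[ℝ] ℂ,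
      0 < (φ (1, 0)).re * (φ (0, 1)).im - (φ (0, 1)).re * (φ (1, 0)).im ∧
      ∀ x : ℝ × ℝ, a * x.1 ^ 2 + b * x.1 * x.2 + c * x.2 ^ 2 = normSq (φ x) := by
  have ha : 0 < a := by simpa using hpos (1, 0) (by simp)
  have hdisc : 0 < 4 * a * c - b ^ 2 := by
    -- the form takes the value `a (4ac - b²)` at `(-b, 2a)`
    have := hpos (-b, 2 * a) (by simp [ha.ne'])
    nlinarith
  obtain ⟨A, hA, hA2⟩ : ∃ A, 0 < A ∧ A ^ 2 = a := ⟨√a, by positivity, Real.sq_sqrt ha.le⟩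
  obtain ⟨E, hE, hE2⟩ : ∃ E, 0 < E ∧ E ^ 2 = 4 * a * c - b ^ 2 :=
    ⟨√(4 * a * c - b ^ 2), by positivity, Real.sq_sqrt hdisc.le⟩
  -- `a x² + b x y + c y² = (A x + b y / 2A)² + (E y / 2A)²`
  let ψ : (ℝ × ℝ) →ₗ[ℝ] ℂ :=
    { toFun x := ⟨A * x.1 + b / (2 * A) * x.2, E / (2 * A) * x.2⟩
      map_add' x y := by apply Complex.ext <;> simp <;> ring
      map_smul' r x := by apply Complex.ext <;> simp <;> ring }
  have hψ : ∀ x : ℝ × ℝ, a * x.1 ^ 2 + b * x.1 * x.2 + c * x.2 ^ 2 = normSq (ψ x) := by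
    intro x
    simp only [ψ, LinearMap.coe_mk, AddHom.coe_mk, normSq_mk]
    field_simp
    linear_combination (4 * c * x.2 ^ 2 - 4 * x.1 ^ 2 * A ^ 2) * hA2 - x.2 ^ 2 * hE2
  have hinj : Function.Injective ψ := by
    refine (injective_iff_map_eq_zero ψ).mpr fun x hx => ?_
    by_contra hne
    have := hψ x ▸ hpos x hne
    simp [hx] at this
  refine ⟨ψ.linearEquivOfInjective hinj (by simp), ?_, hψ⟩
  simpa [ψ] using mul_pos hA (div_pos hE (mul_pos two_pos hA))

/-- If a positive definite integer quadratic form on `ℝ²` admits an integer normed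
pairing, then there is a corresponding lattice `L = φ(ℤ²)` in `ℂ` that is stable
under at least one of the operations `σ₁(z,w) = zw`, `σ₂(z,w) = z̄w`,
`σ₃(z,w) = zw̄`, `σ₄(z,w) = conj(zw)`. -/
theorem stmt5 (m k n : ℤ)
    (f : ℝ × ℝ → ℝ)
    (hf : ∀ x : ℝ × ℝ, f x = (m : ℝ) * x.1 ^ 2 + (k : ℝ) * x.1 * x.2 + (n : ℝ) * x.2 ^ 2)
    (hpos : ∀ x : ℝ × ℝ, x ≠ 0 → 0 < f x)
    (hpairing : ∃ s : (ℝ × ℝ) →ₗ[ℝ] (ℝ × ℝ) →ₗ[ℝ] ℝ × ℝ,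
      (∀ x y : ℝ × ℝ, IsIntVec x → IsIntVec y → IsIntVec (s x y)) ∧
      (∀ x y : ℝ × ℝ, f (s x y) = f x * f y)) :
    ∃ φ : (ℝ × ℝ) ≃ₗ[ℝ] ℂ,
      0 < (φ (1, 0)).re * (φ (0, 1)).im - (φ (0, 1)).re * (φ (1, 0)).im ∧
      (∀ x : ℝ × ℝ, f x = Complex.normSq (φ x)) ∧
      ∃ L : Set ℂ, L = (fun x => φ x) '' {x | IsIntVec x} ∧
        ((∀ z ∈ L, ∀ w ∈ L, z * w ∈ L) ∨
         (∀ z ∈ L, ∀ w ∈ L, (starRingEnd ℂ) z * w ∈ L) ∨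
         (∀ z ∈ L, ∀ w ∈ L, z * (starRingEnd ℂ) w ∈ L) ∨
         (∀ z ∈ L, ∀ w ∈ L, (starRingEnd ℂ) (z * w) ∈ L)) := by
  obtain ⟨s, hs_int, hs_norm⟩ := hpairing
  obtain ⟨φ₀, hφ₀_orient, hφ₀_norm⟩ :=
    exists_linearEquiv_complex_normSq_eq (m : ℝ) k n fun x hx => hf x ▸ hpos x hx
  simp only [← hf] at hφ₀_norm
  let B := φ₀.arrowCongr (φ₀.arrowCongr φ₀) s
  have hB (x y : ℝ × ℝ) : B (φ₀ x) (φ₀ y) = φ₀ (s x y) := by simp [B]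
  have hB_norm (z w : ℂ) : normSq (B z w) = normSq z * normSq w := by
    obtain ⟨x, rfl⟩ := φ₀.surjective z
    obtain ⟨y, rfl⟩ := φ₀.surjective w
    rw [hB, ← hφ₀_norm, ← hφ₀_norm, ← hφ₀_norm, hs_norm]
  have hB_int : ∀ z ∈ φ₀ '' {x | IsIntVec x}, ∀ w ∈ φ₀ '' {x | IsIntVec x},
      B z w ∈ φ₀ '' {x | IsIntVec x} := by
    rintro _ ⟨x, hx, rfl⟩ _ ⟨y, hy, rfl⟩
    exact ⟨s x y, hs_int x y hx hy, (hB x y).symm⟩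
  obtain ⟨i, c, hc, hBc⟩ := exists_eq_mul_twistedMul hB_norm
  obtain ⟨u, hu, hu_twist⟩ := exists_normSq_eq_one_mul_twistedMul i hc
  have hu0 : u ≠ 0 := fun h => by simp [h] at hu
  let φ := φ₀.trans (DistribMulAction.toLinearEquiv ℝ ℂ (Units.mk0 u hu0))
  have hφ (x : ℝ × ℝ) : φ x = u * φ₀ x := rfl
  refine ⟨φ, ?_, fun x => by rw [hφ, normSq_mul, hu, one_mul, hφ₀_norm], _, rfl, ?_⟩
  · rwa [hφ, hφ, mul_re_mul_im_sub, hu, one_mul]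
  have hL := twistedMul_mem_image_mul_left hB_int fun z w => by rw [hBc, hu_twist]
  rw [Set.image_image] at hL
  fin_cases i
  exacts [.inl hL, .inr (.inl hL), .inr (.inr (.inl hL)), .inr (.inr (.inr hL))]
end

section
/- Let σ : ℂ × ℂ → ℂ be an ℝ-bilinear map such that |σ(z,w)|² = |z|²·|w|² for all z, w ∈ ℂ. Then there exists α ∈ ℂ with |α|² = 1 such that one of the following holds: σ(z,w) = α·z·w for all z, w; or σ(z,w) = α·conj(z)·w for all z, w; or σ(z,w) = α·z·conj(w) for all z, w; or σ(z,w) = α·conj(z·w) for all z, w. -/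
lemma keyLem (a : ℂ → ℂ) (hlin : ∀ w : ℂ, a w = w.re * a 1 + w.im * a Complex.I)
    (hn1 : Complex.normSq (a 1) = 1) (hnI : Complex.normSq (a Complex.I) = 1)
    (hnI1 : Complex.normSq (a (1 + Complex.I)) = 2) :
    (∀ w, a w = a 1 * w) ∨ (∀ w, a w = a 1 * (starRingEnd ℂ) w) := by
  set u := a 1 with hu
  set v := a Complex.I with hv
  have hadd : a (1 + Complex.I) = u + v := by
    rw [hlin (1 + Complex.I)]; simp
  rw [hadd] at hnI1
  have horth : u.re * v.re + u.im * v.im = 0 := by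
    simp only [Complex.normSq_apply, Complex.add_re, Complex.add_im] at hnI1 hn1 hnI
    nlinarith [hnI1, hn1, hnI]
  have h1 : v * v + u * u = 0 := by
    have h0 : Complex.normSq (v * v + u * u) =
        (Complex.normSq u - Complex.normSq v)^2 + 4 * (u.re * v.re + u.im * v.im)^2 := by
      simp only [Complex.normSq_apply, Complex.mul_re, Complex.mul_im, Complex.add_re,
        Complex.add_im]
      ring
    rw [hn1, hnI, horth] at h0
    norm_num at h0
    exact h0
  have hsq : (v - u * Complex.I) * (v + u * Complex.I) = 0 := by
    linear_combination h1 - u * u * Complex.I_mul_I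
  rcases mul_eq_zero.mp hsq with h | h
  · left
    intro w
    rw [hlin w]
    have hvI : v = u * Complex.I := by linear_combination h
    rw [hvI]
    conv_rhs => rw [← Complex.re_add_im w]
    ring
  · right
    intro w
    rw [hlin w]
    have hvI : v = -(u * Complex.I) := by linear_combination h
    rw [hvI]
    have hc : (starRingEnd ℂ) w = (w.re : ℂ) - w.im * Complex.I := by
      apply Complex.ext <;> simp
    rw [hc]; ring

/-- (Hurwitz) Any ℝ-bilinear normed pairing `σ` on `ℂ` with respect to the
norm-square is, up to a unit factor `α`, one of the four pairings
`zw`, `z̄w`, `zw̄`, `conj(zw)`. -/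
theorem stmt6 (σ : ℂ →ₗ[ℝ] ℂ →ₗ[ℝ] ℂ)
    (hnorm : ∀ z w : ℂ, Complex.normSq (σ z w) = Complex.normSq z * Complex.normSq w) :
    ∃ α : ℂ, Complex.normSq α = 1 ∧
      ((∀ z w : ℂ, σ z w = α * (z * w)) ∨
       (∀ z w : ℂ, σ z w = α * ((starRingEnd ℂ) z * w)) ∨
       (∀ z w : ℂ, σ z w = α * (z * (starRingEnd ℂ) w)) ∨
       (∀ z w : ℂ, σ z w = α * (starRingEnd ℂ) (z * w))) := by
  set a : ℂ → ℂ := fun w => (σ 1 w - Complex.I * σ Complex.I w) / 2 with ha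
  set b : ℂ → ℂ := fun w => (σ 1 w + Complex.I * σ Complex.I w) / 2 with hb
  have hzdecomp : ∀ z : ℂ, z = (z.re : ℝ) • (1 : ℂ) + (z.im : ℝ) • Complex.I := by
    intro z
    simp [Complex.real_smul]
  have hlincomb : ∀ z w : ℂ, σ z w = (z.re : ℂ) * σ 1 w + (z.im : ℂ) * σ Complex.I w := by
    intro z w
    conv_lhs => rw [hzdecomp z]
    rw [map_add, LinearMap.map_smul, LinearMap.map_smul, LinearMap.add_apply,
      LinearMap.smul_apply, LinearMap.smul_apply]
    simp only [Complex.real_smul]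
  have hlincomb2 : ∀ u w : ℂ, σ u w = (w.re : ℂ) * σ u 1 + (w.im : ℂ) * σ u Complex.I := by
    intro u w
    conv_lhs => rw [hzdecomp w]
    rw [map_add, map_smul, map_smul]
    simp only [Complex.real_smul]
  -- decomposition σ z w = a w * z + b w * conj z
  have hσ : ∀ z w : ℂ, σ z w = a w * z + b w * (starRingEnd ℂ) z := by
    intro z w
    rw [hlincomb z w]
    have hc : (starRingEnd ℂ) z = (z.re : ℂ) - z.im * Complex.I := by
      apply Complex.ext <;> simp
    rw [hc, ha, hb]
    simp only
    have hz : (z : ℂ) = (z.re : ℂ) + z.im * Complex.I := (Complex.re_add_im z).symm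
    linear_combination (-(σ 1 w - Complex.I * σ Complex.I w)/2) * hz +
      (z.im : ℂ) * σ Complex.I w * Complex.I_mul_I
  -- for each w, a w = 0 or b w = 0
  have hab : ∀ w : ℂ, a w = 0 ∨ b w = 0 := by
    intro w
    have e1 : Complex.normSq (a w + b w) = Complex.normSq w := by
      have := hnorm 1 w
      rw [hσ 1 w] at this
      simpa using this
    have e2 : Complex.normSq (a w * Complex.I + b w * (-Complex.I)) = Complex.normSq w := by
      have := hnorm Complex.I w
      rw [hσ Complex.I w] at this
      simpa using this
    have e3 : Complex.normSq (a w * (1 + Complex.I) + b w * (1 - Complex.I))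
        = 2 * Complex.normSq w := by
      have := hnorm (1 + Complex.I) w
      rw [hσ (1 + Complex.I) w] at this
      have hns : Complex.normSq (1 + Complex.I) = 2 := by
        norm_num [Complex.normSq_apply]
      rw [hns] at this
      have hcc : (starRingEnd ℂ) (1 + Complex.I) = 1 - Complex.I := by
        apply Complex.ext <;> simp
      rw [hcc] at this
      exact this
    have hre : (a w * (starRingEnd ℂ) (b w)).re = 0 := by
      simp only [Complex.normSq_apply, Complex.mul_re, Complex.mul_im, Complex.add_re,
        Complex.add_im, Complex.one_re, Complex.one_im, Complex.I_re,
        Complex.I_im, Complex.neg_re, Complex.neg_im, Complex.sub_re, Complex.sub_im,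
        Complex.conj_re, Complex.conj_im] at e1 e2 e3 ⊢
      nlinarith [e1, e2]
    have him : (a w * (starRingEnd ℂ) (b w)).im = 0 := by
      simp only [Complex.normSq_apply, Complex.mul_re, Complex.mul_im, Complex.add_re,
        Complex.add_im, Complex.one_re, Complex.one_im, Complex.I_re,
        Complex.I_im, Complex.neg_re, Complex.neg_im, Complex.sub_re, Complex.sub_im,
        Complex.conj_re, Complex.conj_im] at e1 e2 e3 ⊢
      nlinarith [e1, e2, e3]
    have hprod : a w * (starRingEnd ℂ) (b w) = 0 := by
      apply Complex.ext <;> simp [hre, him]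
    rcases mul_eq_zero.mp hprod with h | h
    · exact Or.inl h
    · exact Or.inr (by simpa using congrArg (starRingEnd ℂ) h)
  have halin : ∀ w : ℂ, a w = (w.re : ℂ) * a 1 + (w.im : ℂ) * a Complex.I := by
    intro w
    rw [ha]; simp only
    rw [hlincomb2 1 w, hlincomb2 Complex.I w]; ring
  have hblin : ∀ w : ℂ, b w = (w.re : ℂ) * b 1 + (w.im : ℂ) * b Complex.I := by
    intro w
    rw [hb]; simp only
    rw [hlincomb2 1 w, hlincomb2 Complex.I w]; ring
  have hnsq2 : Complex.normSq (1 + Complex.I) = 2 := by norm_num [Complex.normSq_apply]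
  rcases Classical.em (∀ w, b w = 0) with hb0 | hbne
  · -- σ z w = a w * z
    have haσ : ∀ w, a w = σ 1 w := by
      intro w
      have := hσ 1 w
      rw [hb0 w] at this
      simpa using this.symm
    have hn1 : Complex.normSq (a 1) = 1 := by
      rw [haσ 1]; simpa using hnorm 1 1
    have hnI : Complex.normSq (a Complex.I) = 1 := by
      rw [haσ Complex.I]; simpa using hnorm 1 Complex.I
    have hnI1 : Complex.normSq (a (1 + Complex.I)) = 2 := by
      rw [haσ (1 + Complex.I)]
      have := hnorm 1 (1 + Complex.I)
      rw [hnsq2] at this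
      simpa using this
    rcases keyLem a halin hn1 hnI hnI1 with hcase | hcase
    · exact ⟨a 1, hn1, Or.inl (fun z w => by rw [hσ z w, hb0 w, hcase w]; ring)⟩
    · exact ⟨a 1, hn1, Or.inr (Or.inr (Or.inl
        (fun z w => by rw [hσ z w, hb0 w, hcase w]; ring)))⟩
  · -- σ z w = b w * conj z
    have ha0 : ∀ w, a w = 0 := by
      push_neg at hbne
      obtain ⟨w₀, hw₀⟩ := hbne
      intro w
      by_contra hw
      have hbw : b w = 0 := (hab w).resolve_left hw
      have haw₀ : a w₀ = 0 := (hab w₀).resolve_right hw₀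
      have hadd_a : a (w + w₀) = a w + a w₀ := by
        rw [ha]; simp only [map_add]; ring
      have hadd_b : b (w + w₀) = b w + b w₀ := by
        rw [hb]; simp only [map_add]; ring
      rcases hab (w + w₀) with h | h
      · rw [hadd_a, haw₀, add_zero] at h; exact hw h
      · rw [hadd_b, hbw, zero_add] at h; exact hw₀ h
    have hbσ : ∀ w, b w = σ 1 w := by
      intro w
      have := hσ 1 w
      rw [ha0 w] at this
      simpa using this.symm
    have hn1 : Complex.normSq (b 1) = 1 := by
      rw [hbσ 1]; simpa using hnorm 1 1
    have hnI : Complex.normSq (b Complex.I) = 1 := by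
      rw [hbσ Complex.I]; simpa using hnorm 1 Complex.I
    have hnI1 : Complex.normSq (b (1 + Complex.I)) = 2 := by
      rw [hbσ (1 + Complex.I)]
      have := hnorm 1 (1 + Complex.I)
      rw [hnsq2] at this
      simpa using this
    rcases keyLem b hblin hn1 hnI hnI1 with hcase | hcase
    · exact ⟨b 1, hn1, Or.inr (Or.inl
        (fun z w => by rw [hσ z w, ha0 w, hcase w]; ring))⟩
    · refine ⟨b 1, hn1, Or.inr (Or.inr (Or.inr (fun z w => ?_)))⟩
      rw [hσ z w, ha0 w, hcase w, map_mul]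
      ring
end

section
/- Let m, k, n ∈ ℤ with gcd(m, gcd(k, n)) = 1 and k² − 4mn ≠ 0, and let f(x) = m·x₁² + k·x₁x₂ + n·x₂² be the corresponding primitive nondegenerate integer quadratic form. Suppose f(x) ≠ 1 for every x ∈ ℤ². Then f admits no integer normed pairing of type (+,+), none of type (−,+), and none of type (+,−): there is no ℝ-bilinear s : ℝ² × ℝ² → ℝ² with s(ℤ² × ℤ²) ⊆ ℤ², f(s(x,y)) = f(x)·f(y) for all x, y ∈ ℝ², such that (det(x ↦ s(x,y)), det(y ↦ s(x,y))) equals (ε₁·f(y), ε₂·f(x)) for all x, y with (ε₁, ε₂) one of (+1,+1), (−1,+1), (+1,−1). -/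
private lemma kill (m k n g0 g1 : ℤ) (hmkn : ¬(m = 0 ∧ k = 0 ∧ n = 0))
    (h0 : m * g0 = 0) (h1 : (m + k + n) * (g0 + g1) = 0)
    (h2 : (m - k + n) * (g0 - g1) = 0) (h3 : (m + 2*k + 4*n) * (g0 + 2*g1) = 0) :
    g0 = 0 ∧ g1 = 0 := by
  have h2p : 2*(n*g0 + k*g1) = 0 := by linear_combination h1 + h2 - 2*h0
  have hp2 : n*g0 + k*g1 = 0 := by linarith
  have h3p : 6*(n*g1) = 0 := by linear_combination h3 + 3*h0 - 3*h1 - h2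
  have hp3 : n*g1 = 0 := by linarith
  have h1p : 2*(k*g0 + m*g1) = 0 := by linear_combination h1 - h2 - 2*hp3
  have hp1 : k*g0 + m*g1 = 0 := by linarith
  rcases eq_or_ne m 0 with hm | hm
  · rcases eq_or_ne k 0 with hk | hk
    · have hn : n ≠ 0 := fun hn0 => hmkn ⟨hm, hk, hn0⟩
      have e0 : n * g0 = 0 := by linear_combination hp2 - g1*hk
      have e1 : n * g1 = 0 := hp3
      exact ⟨(mul_eq_zero.mp e0).resolve_left hn, (mul_eq_zero.mp e1).resolve_left hn⟩
    · have e0 : k * g0 = 0 := by linear_combination hp1 - g1*hm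
      have hg0 : g0 = 0 := (mul_eq_zero.mp e0).resolve_left hk
      have e1 : k * g1 = 0 := by linear_combination hp2 - n*hg0
      exact ⟨hg0, (mul_eq_zero.mp e1).resolve_left hk⟩
  · have hg0 : g0 = 0 := (mul_eq_zero.mp h0).resolve_left hm
    have e1 : m * g1 = 0 := by linear_combination hp1 - k*hg0
    exact ⟨hg0, (mul_eq_zero.mp e1).resolve_left hm⟩

private lemma bez3 (m k n u v w x : ℤ) (hbez : u*m + v*k + w*n = 1)
    (hm : m * x = 0) (hk : k * x = 0) (hn : n * x = 0) : x = 0 := by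
  linear_combination u*hm + v*hk + w*hn - x*hbez

private lemma core_int (m k n u v w ι a1 a2 a3 a4 b1 b2 b3 b4 : ℤ)
    (hbez : u*m + v*k + w*n = 1)
    (hnd : k^2 - 4*m*n ≠ 0)
    (hno1 : ∀ a b : ℤ, m*a^2 + k*a*b + n*b^2 ≠ 1)
    (hι : ι = 1 ∨ ι = -1)
    (hB1 : ∀ t : ℤ, m*(a1+t*a3)^2 + k*(a1+t*a3)*(b1+t*b3) + n*(b1+t*b3)^2
      = (m+k*t+n*t^2)*m)
    (hB2 : ∀ t : ℤ, m*(a2+t*a4)^2 + k*(a2+t*a4)*(b2+t*b4) + n*(b2+t*b4)^2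
      = (m+k*t+n*t^2)*n)
    (hB3 : ∀ t : ℤ, m*((a1+a2)+t*(a3+a4))^2 + k*((a1+a2)+t*(a3+a4))*((b1+b2)+t*(b3+b4))
      + n*((b1+b2)+t*(b3+b4))^2 = (m+k*t+n*t^2)*(m+k+n))
    (hB4 : ∀ t : ℤ, (a1+t*a3)*(b2+t*b4) - (a2+t*a4)*(b1+t*b3) = m+k*t+n*t^2)
    (hA1 : ∀ t : ℤ, m*(a1+t*a2)^2 + k*(a1+t*a2)*(b1+t*b2) + n*(b1+t*b2)^2
      = (m+k*t+n*t^2)*m)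
    (hA2 : ∀ t : ℤ, m*(a3+t*a4)^2 + k*(a3+t*a4)*(b3+t*b4) + n*(b3+t*b4)^2
      = (m+k*t+n*t^2)*n)
    (hA3 : ∀ t : ℤ, m*((a1+a3)+t*(a2+a4))^2 + k*((a1+a3)+t*(a2+a4))*((b1+b3)+t*(b2+b4))
      + n*((b1+b3)+t*(b2+b4))^2 = (m+k*t+n*t^2)*(m+k+n))
    (hA4 : ∀ t : ℤ, (a1+t*a2)*(b3+t*b4) - (a3+t*a4)*(b1+t*b2) = ι*(m+k*t+n*t^2)) :
    False := by
  have hmkn : ¬(m = 0 ∧ k = 0 ∧ n = 0) := by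
    rintro ⟨rfl, rfl, rfl⟩; exact hnd (by ring)
  -- B-side structural relations
  have keyB01 : ∀ t : ℤ, (m+k*t+n*t^2) * ((n*b1+m*a2) + t*(n*b3+m*a4)) = 0 := by
    intro t
    have h2 : 2*((m+k*t+n*t^2) * ((n*b1+m*a2) + t*(n*b3+m*a4))) = 0 := by
      linear_combination (-2*(a2+t*a4)-(a1+t*a3))*(hB1 t) + (-(a1+t*a3))*(hB2 t)
        + (a1+t*a3)*(hB3 t) + (-(k*(a1+t*a3)+2*n*(b1+t*b3)))*(hB4 t)
    linarith
  have keyB00 : ∀ t : ℤ, (m+k*t+n*t^2) * ((m*a1+k*b1-m*b2) + t*(m*a3+k*b3-m*b4)) = 0 := by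
    intro t
    have h2 : 2*((m+k*t+n*t^2) * ((m*a1+k*b1-m*b2) + t*(m*a3+k*b3-m*b4))) = 0 := by
      linear_combination (2*(b2+t*b4)+(b1+t*b3))*(hB1 t) + (b1+t*b3)*(hB2 t)
        + (-(b1+t*b3))*(hB3 t) + (-(2*m*(a1+t*a3)+k*(b1+t*b3)))*(hB4 t)
    linarith
  have keyB11 : ∀ t : ℤ, (m+k*t+n*t^2) * ((k*a2+n*b2-n*a1) + t*(k*a4+n*b4-n*a3)) = 0 := by
    intro t
    have h2 : 2*((m+k*t+n*t^2) * ((k*a2+n*b2-n*a1) + t*(k*a4+n*b4-n*a3))) = 0 := by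
      linear_combination (a2+t*a4)*(hB1 t) + ((a2+t*a4)+2*(a1+t*a3))*(hB2 t)
        + (-(a2+t*a4))*(hB3 t) + (-(k*(a2+t*a4)+2*n*(b2+t*b4)))*(hB4 t)
    linarith
  obtain ⟨hR1, hR4⟩ := kill m k n (n*b1+m*a2) (n*b3+m*a4) hmkn
    (by linear_combination keyB01 0) (by linear_combination keyB01 1)
    (by linear_combination keyB01 (-1)) (by linear_combination keyB01 2)
  obtain ⟨hR2, hR5⟩ := kill m k n (m*a1+k*b1-m*b2) (m*a3+k*b3-m*b4) hmkn
    (by linear_combination keyB00 0) (by linear_combination keyB00 1)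
    (by linear_combination keyB00 (-1)) (by linear_combination keyB00 2)
  obtain ⟨hR3, hR6⟩ := kill m k n (k*a2+n*b2-n*a1) (k*a4+n*b4-n*a3) hmkn
    (by linear_combination keyB11 0) (by linear_combination keyB11 1)
    (by linear_combination keyB11 (-1)) (by linear_combination keyB11 2)
  have hDB1 : a1*b2 - a2*b1 = m := by linear_combination hB4 0
  have hDB3 : a1*b4 + a3*b2 - a2*b3 - a4*b1 = k := by
    have h2 : 2*(a1*b4 + a3*b2 - a2*b3 - a4*b1) = 2*k := by
      linear_combination hB4 1 - hB4 (-1)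
    linarith
  have hDB2 : a3*b4 - a4*b3 = n := by
    have h2 : 2*(a3*b4 - a4*b3) = 2*n := by
      linear_combination hB4 1 + hB4 (-1) - 2*(hB4 0)
    linarith
  -- A-side: case analysis on ι, producing the two common facts
  have hmain : (a1+b3)*(b3-b2) = 0 ∧
      (b3*b4 - a3*b3 - b2*b4 - a1*a3 + a1*a2 - a2*b2 + a2*b3 + a4*b1) = 0 := by
    rcases hι with rfl | rfl
    · -- ι = 1
      have keyA01 : ∀ t : ℤ, (m+k*t+n*t^2) * ((n*b1+m*a3) + t*(n*b2+m*a4)) = 0 := by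
        intro t
        have h2 : 2*((m+k*t+n*t^2) * ((n*b1+m*a3) + t*(n*b2+m*a4))) = 0 := by
          linear_combination (-2*(a3+t*a4)-(a1+t*a2))*(hA1 t) + (-(a1+t*a2))*(hA2 t)
            + (a1+t*a2)*(hA3 t) + (-(k*(a1+t*a2)+2*n*(b1+t*b2)))*(hA4 t)
        linarith
      have keyA00 : ∀ t : ℤ, (m+k*t+n*t^2) * ((m*a1+k*b1-m*b3) + t*(m*a2+k*b2-m*b4)) = 0 := by
        intro t
        have h2 : 2*((m+k*t+n*t^2) * ((m*a1+k*b1-m*b3) + t*(m*a2+k*b2-m*b4))) = 0 := by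
          linear_combination (2*(b3+t*b4)+(b1+t*b2))*(hA1 t) + (b1+t*b2)*(hA2 t)
            + (-(b1+t*b2))*(hA3 t) + (-(2*m*(a1+t*a2)+k*(b1+t*b2)))*(hA4 t)
        linarith
      have keyA11 : ∀ t : ℤ, (m+k*t+n*t^2) * ((k*a3+n*b3-n*a1) + t*(k*a4+n*b4-n*a2)) = 0 := by
        intro t
        have h2 : 2*((m+k*t+n*t^2) * ((k*a3+n*b3-n*a1) + t*(k*a4+n*b4-n*a2))) = 0 := by
          linear_combination (a3+t*a4)*(hA1 t) + ((a3+t*a4)+2*(a1+t*a2))*(hA2 t)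
            + (-(a3+t*a4))*(hA3 t) + (-(k*(a3+t*a4)+2*n*(b3+t*b4)))*(hA4 t)
        linarith
      obtain ⟨hS1, hS4⟩ := kill m k n (n*b1+m*a3) (n*b2+m*a4) hmkn
        (by linear_combination keyA01 0) (by linear_combination keyA01 1)
        (by linear_combination keyA01 (-1)) (by linear_combination keyA01 2)
      obtain ⟨hS2, hS5⟩ := kill m k n (m*a1+k*b1-m*b3) (m*a2+k*b2-m*b4) hmkn
        (by linear_combination keyA00 0) (by linear_combination keyA00 1)
        (by linear_combination keyA00 (-1)) (by linear_combination keyA00 2)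
      obtain ⟨hS3, hS6⟩ := kill m k n (k*a3+n*b3-n*a1) (k*a4+n*b4-n*a2) hmkn
        (by linear_combination keyA11 0) (by linear_combination keyA11 1)
        (by linear_combination keyA11 (-1)) (by linear_combination keyA11 2)
      have hma : m*(a2-a3) = 0 := by linear_combination hR1 - hS1
      have hna : n*(a2-a3) = 0 := by linear_combination hR6 - hS6
      have hmb : m*(b2-b3) = 0 := by linear_combination hS2 - hR2
      have hnb : n*(b2-b3) = 0 := by linear_combination hS4 - hR4
      have hkb : k*(b2-b3) = 0 := by linear_combination hS5 - hR5 - hma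
      have hM2 : b2 - b3 = 0 := bez3 m k n u v w _ hbez hmb hkb hnb
      have hka : k*(a2-a3) = 0 := by linear_combination hR3 - hS3 - n*hM2
      have hM1 : a2 - a3 = 0 := bez3 m k n u v w _ hbez hma hka hna
      constructor
      · linear_combination (-(a1+b3))*hM2
      · have hmY : m*(b3*b4 - a3*b3 - b2*b4 - a1*a3 + a1*a2 - a2*b2 + a2*b3 + a4*b1) = 0 := by
          linear_combination a1*hR1 + (a2+b4)*hR2 + b1*hR4 - (a1+b3)*hS1 - (a2+b4)*hS2
        have hkY : k*(b3*b4 - a3*b3 - b2*b4 - a1*a3 + a1*a2 - a2*b2 + a2*b3 + a4*b1) = 0 := by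
          linear_combination (-a3+4*b4)*hR1 + 3*a4*hR2 + (a1-b2-2*b3)*hR3 + (-a1+2*b2)*hR4
            + (3*a2-a3+b4)*hR5 + (-2*n)*hDB1 + 2*m*hDB2 + (-2*a2+a3-4*b4)*hS1
            + (-2*a4)*hS2 + (-a1)*hS3 + b2*hS4 + (-b4)*hS5
        have hnY : n*(b3*b4 - a3*b3 - b2*b4 - a1*a3 + a1*a2 - a2*b2 + a2*b3 + a4*b1) = 0 := by
          linear_combination a3*hR3 + (a2-a3+2*b4)*hR4 + a4*hR5 + k*hDB2 + (-n)*hDB3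
            - (a2+b4)*hS3 - (a2+b4)*hS4
        exact bez3 m k n u v w _ hbez hmY hkY hnY
    · -- ι = -1
      have keyA00 : ∀ t : ℤ, (m+k*t+n*t^2) * (m*(a1+b3) + t*(m*(a2+b4))) = 0 := by
        intro t
        have h2 : 2*((m+k*t+n*t^2) * (m*(a1+b3) + t*(m*(a2+b4)))) = 0 := by
          linear_combination (-(2*(b3+t*b4)+(b1+t*b2)))*(hA1 t) + (-(b1+t*b2))*(hA2 t)
            + (b1+t*b2)*(hA3 t) + (2*m*(a1+t*a2)+k*(b1+t*b2))*(hA4 t)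
        linarith
      have keyA11 : ∀ t : ℤ, (m+k*t+n*t^2) * (n*(a1+b3) + t*(n*(a2+b4))) = 0 := by
        intro t
        have h2 : 2*((m+k*t+n*t^2) * (n*(a1+b3) + t*(n*(a2+b4)))) = 0 := by
          linear_combination (-(a3+t*a4))*(hA1 t) + (-((a3+t*a4)+2*(a1+t*a2)))*(hA2 t)
            + (a3+t*a4)*(hA3 t) + (k*(a3+t*a4)+2*n*(b3+t*b4))*(hA4 t)
        linarith
      have keyA01 : ∀ t : ℤ, (m+k*t+n*t^2) * ((k*a1+n*b1-m*a3) + t*(k*a2+n*b2-m*a4)) = 0 := by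
        intro t
        have h2 : 2*((m+k*t+n*t^2) * ((k*a1+n*b1-m*a3) + t*(k*a2+n*b2-m*a4))) = 0 := by
          linear_combination (2*(a3+t*a4)+(a1+t*a2))*(hA1 t) + (a1+t*a2)*(hA2 t)
            + (-(a1+t*a2))*(hA3 t) + (k*(a1+t*a2)+2*n*(b1+t*b2))*(hA4 t)
        linarith
      have keyA10 : ∀ t : ℤ, (m+k*t+n*t^2) * ((m*a3+k*b3-n*b1) + t*(m*a4+k*b4-n*b2)) = 0 := by
        intro t
        have h2 : 2*((m+k*t+n*t^2) * ((m*a3+k*b3-n*b1) + t*(m*a4+k*b4-n*b2))) = 0 := by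
          linear_combination (b3+t*b4)*(hA1 t) + ((b3+t*b4)+2*(b1+t*b2))*(hA2 t)
            + (-(b3+t*b4))*(hA3 t) + (2*m*(a3+t*a4)+k*(b3+t*b4))*(hA4 t)
        linarith
      obtain ⟨hL1m, hL2m⟩ := kill m k n (m*(a1+b3)) (m*(a2+b4)) hmkn
        (by linear_combination keyA00 0) (by linear_combination keyA00 1)
        (by linear_combination keyA00 (-1)) (by linear_combination keyA00 2)
      obtain ⟨hL1n, hL2n⟩ := kill m k n (n*(a1+b3)) (n*(a2+b4)) hmkn
        (by linear_combination keyA11 0) (by linear_combination keyA11 1)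
        (by linear_combination keyA11 (-1)) (by linear_combination keyA11 2)
      obtain ⟨hS20, hS21⟩ := kill m k n (k*a1+n*b1-m*a3) (k*a2+n*b2-m*a4) hmkn
        (by linear_combination keyA01 0) (by linear_combination keyA01 1)
        (by linear_combination keyA01 (-1)) (by linear_combination keyA01 2)
      obtain ⟨hS30, hS31⟩ := kill m k n (m*a3+k*b3-n*b1) (m*a4+k*b4-n*b2) hmkn
        (by linear_combination keyA10 0) (by linear_combination keyA10 1)
        (by linear_combination keyA10 (-1)) (by linear_combination keyA10 2)
      have hL1k : k*(a1+b3) = 0 := by linear_combination hS20 + hS30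
      have hL2k : k*(a2+b4) = 0 := by linear_combination hS21 + hS31
      have hL1 : a1 + b3 = 0 := bez3 m k n u v w _ hbez hL1m hL1k hL1n
      have hL2 : a2 + b4 = 0 := bez3 m k n u v w _ hbez hL2m hL2k hL2n
      constructor
      · linear_combination (b3-b2)*hL1
      · have hmY : m*(b3*b4 - a3*b3 - b2*b4 - a1*a3 + a1*a2 - a2*b2 + a2*b3 + a4*b1) = 0 := by
          linear_combination a2*hR2 + (-a1+b2-b3)*hR5 + k*hDB1 + (-m)*hDB3
            + (-b2+b3)*hS20 + (-b2+b3)*hS30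
        have hkY : k*(b3*b4 - a3*b3 - b2*b4 - a1*a3 + a1*a2 - a2*b2 + a2*b3 + a4*b1) = 0 := by
          linear_combination (a3+b4)*hR1 + a4*hR2 + (b2-2*b3)*hR3 + (-2*a1)*hR4
            + (a2-a3)*hR5 + 2*n*hDB1 + (-2*m)*hDB2 + (2*a2-a3)*hS20
            + (-a1-2*b2+2*b3)*hS21 + b4*hS30 + (-b2)*hS31
        have hnY : n*(b3*b4 - a3*b3 - b2*b4 - a1*a3 + a1*a2 - a2*b2 + a2*b3 + a4*b1) = 0 := by
          linear_combination (-a4)*hR1 + (-a2+3*a3-2*b4)*hR3 + (a2-a3+b4)*hR4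
            + (-2*a1)*hR6 + 2*a4*hS20 + (a2-3*a3+b4)*hS21 + a2*hS31
        exact bez3 m k n u v w _ hbez hmY hkY hnY
  obtain ⟨hSprod, hY⟩ := hmain
  rcases eq_or_ne m 0 with hm | hm
  · -- m = 0, so k ≠ 0
    have hk : k ≠ 0 := by
      intro h; exact hnd (by rw [hm, h]; ring)
    have h1 : k*(u*b3 + v*(b4-a3) - w*a4) = b4 - a3 := by
      linear_combination (b4-a3)*hbez + u*hR5 - w*hR6
    have h2 : k*(-u*b1 + v*(a1-b2) + w*a2) = a1 - b2 := by
      linear_combination (a1-b2)*hbez - u*hR2 + w*hR3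
    have hTkk : m*(b4-a3)^2 + k*(b4-a3)*(a1-b2) + n*(a1-b2)^2 = k^2 := by
      linear_combination (-(b4-a3))*hR5 - (a1-b2)*hR3 + k*hY + k*hDB3
    have key : k^2 * (m*(u*b3 + v*(b4-a3) - w*a4)^2
        + k*(u*b3 + v*(b4-a3) - w*a4)*(-u*b1 + v*(a1-b2) + w*a2)
        + n*(-u*b1 + v*(a1-b2) + w*a2)^2) = k^2 * 1 := by
      linear_combination (m*(k*(u*b3 + v*(b4-a3) - w*a4)+(b4-a3)) + k*(a1-b2))*h1
        + (k*(k*(u*b3 + v*(b4-a3) - w*a4)) + n*(k*(-u*b1 + v*(a1-b2) + w*a2)+(a1-b2)))*h2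
        + hTkk
    exact hno1 _ _ (mul_left_cancel₀ (pow_ne_zero 2 hk) key)
  · have h1 : m*(u*b3 + v*(b4-a3) - w*a4) = b3 := by
      linear_combination b3*hbez - v*hR5 - w*hR4
    have h2 : m*(-u*b1 + v*(a1-b2) + w*a2) = -b1 := by
      linear_combination (-b1)*hbez + v*hR2 + w*hR1
    have hTmm : m*b3^2 - k*b1*b3 + n*b1^2 = m^2 := by
      linear_combination b1*hR1 - b3*hR2 + m*hSprod + m*hDB1
    have key : m^2 * (m*(u*b3 + v*(b4-a3) - w*a4)^2
        + k*(u*b3 + v*(b4-a3) - w*a4)*(-u*b1 + v*(a1-b2) + w*a2)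
        + n*(-u*b1 + v*(a1-b2) + w*a2)^2) = m^2 * 1 := by
      linear_combination (m*(m*(u*b3 + v*(b4-a3) - w*a4)+b3) - k*b1)*h1
        + (k*(m*(u*b3 + v*(b4-a3) - w*a4)) + n*(m*(-u*b1 + v*(a1-b2) + w*a2)-b1))*h2
        + hTmm
    exact hno1 _ _ (mul_left_cancel₀ (pow_ne_zero 2 hm) key)

private lemma core_real (m k n : ℤ) (hprim : Int.gcd m (Int.gcd k n) = 1)
    (hnd : k ^ 2 - 4 * m * n ≠ 0)
    (f : ℝ × ℝ → ℝ)
    (hf : ∀ x : ℝ × ℝ, f x = (m : ℝ) * x.1 ^ 2 + (k : ℝ) * x.1 * x.2 + (n : ℝ) * x.2 ^ 2)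
    (hno1 : ∀ a b : ℤ, m * a ^ 2 + k * a * b + n * b ^ 2 ≠ 1)
    (ι : ℤ) (hι : ι = 1 ∨ ι = -1)
    (s : (ℝ × ℝ) →ₗ[ℝ] (ℝ × ℝ) →ₗ[ℝ] ℝ × ℝ)
    (hint : ∀ x y : ℝ × ℝ, IsIntVec x → IsIntVec y → IsIntVec (s x y))
    (hnorm : ∀ x y : ℝ × ℝ, f (s x y) = f x * f y)
    (hdetA : ∀ y : ℝ × ℝ, det2 (fun x => s x y) = (ι : ℝ) * f y)
    (hdetB : ∀ x : ℝ × ℝ, det2 (fun y => s x y) = f x) : False := by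
  have hfval : ∀ X Y : ℝ, f (X, Y) = (m : ℝ) * X ^ 2 + (k : ℝ) * X * Y + (n : ℝ) * Y ^ 2 :=
    fun X Y => hf (X, Y)
  have i10 : IsIntVec ((1 : ℝ), (0 : ℝ)) := ⟨1, 0, by norm_num⟩
  have i01 : IsIntVec ((0 : ℝ), (1 : ℝ)) := ⟨0, 1, by norm_num⟩
  obtain ⟨a1, b1, e11⟩ := hint _ _ i10 i10
  obtain ⟨a2, b2, e12⟩ := hint _ _ i10 i01
  obtain ⟨a3, b3, e21⟩ := hint _ _ i01 i10
  obtain ⟨a4, b4, e22⟩ := hint _ _ i01 i01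
  have hxsplit : ∀ t : ℝ, ((1 : ℝ), t) = ((1 : ℝ), (0 : ℝ)) + t • ((0 : ℝ), (1 : ℝ)) := by
    intro t; simp [Prod.ext_iff]
  have hs1 : ∀ t : ℝ, s (1, t) (1, 0) = ((a1 : ℝ) + t * a3, (b1 : ℝ) + t * b3) := by
    intro t
    rw [hxsplit t, map_add, map_smul, LinearMap.add_apply, LinearMap.smul_apply, e11, e21]
    simp [Prod.ext_iff]
  have hs2 : ∀ t : ℝ, s (1, t) (0, 1) = ((a2 : ℝ) + t * a4, (b2 : ℝ) + t * b4) := by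
    intro t
    rw [hxsplit t, map_add, map_smul, LinearMap.add_apply, LinearMap.smul_apply, e12, e22]
    simp [Prod.ext_iff]
  have h11split : ((1 : ℝ), (1 : ℝ)) = ((1 : ℝ), (0 : ℝ)) + ((0 : ℝ), (1 : ℝ)) := by
    simp [Prod.ext_iff]
  have hs3 : ∀ t : ℝ, s (1, t) (1, 1)
      = (((a1 : ℝ) + a2) + t * ((a3 : ℝ) + a4), ((b1 : ℝ) + b2) + t * ((b3 : ℝ) + b4)) := by
    intro t
    rw [h11split, map_add, hs1 t, hs2 t]
    simp [Prod.ext_iff]; constructor <;> ring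
  have hy1 : ∀ t : ℝ, s (1, 0) (1, t) = ((a1 : ℝ) + t * a2, (b1 : ℝ) + t * b2) := by
    intro t
    rw [hxsplit t, map_add, map_smul, e11, e12]
    simp [Prod.ext_iff]
  have hy2 : ∀ t : ℝ, s (0, 1) (1, t) = ((a3 : ℝ) + t * a4, (b3 : ℝ) + t * b4) := by
    intro t
    rw [hxsplit t, map_add, map_smul, e21, e22]
    simp [Prod.ext_iff]
  have hy3 : ∀ t : ℝ, s (1, 1) (1, t)
      = (((a1 : ℝ) + a3) + t * ((a2 : ℝ) + a4), ((b1 : ℝ) + b3) + t * ((b2 : ℝ) + b4)) := by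
    intro t
    rw [h11split, map_add, LinearMap.add_apply, hy1 t, hy2 t]
    simp [Prod.ext_iff]; constructor <;> ring
  -- real instances
  have HB1 : ∀ t : ℝ, (m : ℝ)*((a1 : ℝ)+t*a3)^2 + (k : ℝ)*((a1 : ℝ)+t*a3)*((b1 : ℝ)+t*b3)
      + (n : ℝ)*((b1 : ℝ)+t*b3)^2 = ((m : ℝ)+(k : ℝ)*t+(n : ℝ)*t^2)*(m : ℝ) := by
    intro t
    have h := hnorm (1, t) (1, 0)
    rw [hs1 t, hfval, hfval, hfval] at h
    linear_combination h
  have HB2 : ∀ t : ℝ, (m : ℝ)*((a2 : ℝ)+t*a4)^2 + (k : ℝ)*((a2 : ℝ)+t*a4)*((b2 : ℝ)+t*b4)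
      + (n : ℝ)*((b2 : ℝ)+t*b4)^2 = ((m : ℝ)+(k : ℝ)*t+(n : ℝ)*t^2)*(n : ℝ) := by
    intro t
    have h := hnorm (1, t) (0, 1)
    rw [hs2 t, hfval, hfval, hfval] at h
    linear_combination h
  have HB3 : ∀ t : ℝ, (m : ℝ)*(((a1 : ℝ)+a2)+t*((a3 : ℝ)+a4))^2
      + (k : ℝ)*(((a1 : ℝ)+a2)+t*((a3 : ℝ)+a4))*(((b1 : ℝ)+b2)+t*((b3 : ℝ)+b4))
      + (n : ℝ)*(((b1 : ℝ)+b2)+t*((b3 : ℝ)+b4))^2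
      = ((m : ℝ)+(k : ℝ)*t+(n : ℝ)*t^2)*((m : ℝ)+(k : ℝ)+(n : ℝ)) := by
    intro t
    have h := hnorm (1, t) (1, 1)
    rw [hs3 t, hfval, hfval, hfval] at h
    linear_combination h
  have HB4 : ∀ t : ℝ, ((a1 : ℝ)+t*a3)*((b2 : ℝ)+t*b4) - ((a2 : ℝ)+t*a4)*((b1 : ℝ)+t*b3)
      = (m : ℝ)+(k : ℝ)*t+(n : ℝ)*t^2 := by
    intro t
    have h := hdetB (1, t)
    simp only [det2] at h
    rw [hs1 t, hs2 t, hfval] at h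
    linear_combination h
  have HA1 : ∀ t : ℝ, (m : ℝ)*((a1 : ℝ)+t*a2)^2 + (k : ℝ)*((a1 : ℝ)+t*a2)*((b1 : ℝ)+t*b2)
      + (n : ℝ)*((b1 : ℝ)+t*b2)^2 = ((m : ℝ)+(k : ℝ)*t+(n : ℝ)*t^2)*(m : ℝ) := by
    intro t
    have h := hnorm (1, 0) (1, t)
    rw [hy1 t, hfval, hfval, hfval] at h
    linear_combination h
  have HA2 : ∀ t : ℝ, (m : ℝ)*((a3 : ℝ)+t*a4)^2 + (k : ℝ)*((a3 : ℝ)+t*a4)*((b3 : ℝ)+t*b4)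
      + (n : ℝ)*((b3 : ℝ)+t*b4)^2 = ((m : ℝ)+(k : ℝ)*t+(n : ℝ)*t^2)*(n : ℝ) := by
    intro t
    have h := hnorm (0, 1) (1, t)
    rw [hy2 t, hfval, hfval, hfval] at h
    linear_combination h
  have HA3 : ∀ t : ℝ, (m : ℝ)*(((a1 : ℝ)+a3)+t*((a2 : ℝ)+a4))^2
      + (k : ℝ)*(((a1 : ℝ)+a3)+t*((a2 : ℝ)+a4))*(((b1 : ℝ)+b3)+t*((b2 : ℝ)+b4))
      + (n : ℝ)*(((b1 : ℝ)+b3)+t*((b2 : ℝ)+b4))^2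
      = ((m : ℝ)+(k : ℝ)*t+(n : ℝ)*t^2)*((m : ℝ)+(k : ℝ)+(n : ℝ)) := by
    intro t
    have h := hnorm (1, 1) (1, t)
    rw [hy3 t, hfval, hfval, hfval] at h
    linear_combination h
  have HA4 : ∀ t : ℝ, ((a1 : ℝ)+t*a2)*((b3 : ℝ)+t*b4) - ((a3 : ℝ)+t*a4)*((b1 : ℝ)+t*b2)
      = (ι : ℝ)*((m : ℝ)+(k : ℝ)*t+(n : ℝ)*t^2) := by
    intro t
    have h := hdetA (1, t)
    simp only [det2] at h
    rw [hy1 t, hy2 t, hfval] at h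
    linear_combination h
  -- integer versions
  have hB1 : ∀ t : ℤ, m*(a1+t*a3)^2 + k*(a1+t*a3)*(b1+t*b3) + n*(b1+t*b3)^2
      = (m+k*t+n*t^2)*m := by intro t; exact_mod_cast HB1 (t : ℝ)
  have hB2 : ∀ t : ℤ, m*(a2+t*a4)^2 + k*(a2+t*a4)*(b2+t*b4) + n*(b2+t*b4)^2
      = (m+k*t+n*t^2)*n := by intro t; exact_mod_cast HB2 (t : ℝ)
  have hB3 : ∀ t : ℤ, m*((a1+a2)+t*(a3+a4))^2 + k*((a1+a2)+t*(a3+a4))*((b1+b2)+t*(b3+b4))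
      + n*((b1+b2)+t*(b3+b4))^2 = (m+k*t+n*t^2)*(m+k+n) := by
    intro t; exact_mod_cast HB3 (t : ℝ)
  have hB4 : ∀ t : ℤ, (a1+t*a3)*(b2+t*b4) - (a2+t*a4)*(b1+t*b3) = m+k*t+n*t^2 := by
    intro t; exact_mod_cast HB4 (t : ℝ)
  have hA1 : ∀ t : ℤ, m*(a1+t*a2)^2 + k*(a1+t*a2)*(b1+t*b2) + n*(b1+t*b2)^2
      = (m+k*t+n*t^2)*m := by intro t; exact_mod_cast HA1 (t : ℝ)
  have hA2 : ∀ t : ℤ, m*(a3+t*a4)^2 + k*(a3+t*a4)*(b3+t*b4) + n*(b3+t*b4)^2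
      = (m+k*t+n*t^2)*n := by intro t; exact_mod_cast HA2 (t : ℝ)
  have hA3 : ∀ t : ℤ, m*((a1+a3)+t*(a2+a4))^2 + k*((a1+a3)+t*(a2+a4))*((b1+b3)+t*(b2+b4))
      + n*((b1+b3)+t*(b2+b4))^2 = (m+k*t+n*t^2)*(m+k+n) := by
    intro t; exact_mod_cast HA3 (t : ℝ)
  have hA4 : ∀ t : ℤ, (a1+t*a2)*(b3+t*b4) - (a3+t*a4)*(b1+t*b2) = ι*(m+k*t+n*t^2) := by
    intro t; exact_mod_cast HA4 (t : ℝ)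
  -- Bezout coefficients
  have hg2 := Int.gcd_eq_gcd_ab k n
  have hg1 := Int.gcd_eq_gcd_ab m (Int.gcd k n)
  rw [hprim] at hg1
  have hbez : (Int.gcdA m (Int.gcd k n)) * m
      + (Int.gcdA k n * Int.gcdB m (Int.gcd k n)) * k
      + (Int.gcdB k n * Int.gcdB m (Int.gcd k n)) * n = 1 := by
    push_cast at hg1
    linear_combination (-1) * hg1 - (Int.gcdB m (Int.gcd k n)) * hg2
  exact core_int m k n _ _ _ ι a1 a2 a3 a4 b1 b2 b3 b4 hbez hnd hno1 hι
    hB1 hB2 hB3 hB4 hA1 hA2 hA3 hA4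

/-- A primitive nondegenerate integer quadratic form that attains the value 1
nowhere on `ℤ²` admits no integer normed pairing of type `(+,+)`, `(−,+)`
or `(+,−)`. -/
theorem stmt8 (m k n : ℤ) (hprim : Int.gcd m (Int.gcd k n) = 1)
    (hnd : k ^ 2 - 4 * m * n ≠ 0)
    (f : ℝ × ℝ → ℝ)
    (hf : ∀ x : ℝ × ℝ, f x = (m : ℝ) * x.1 ^ 2 + (k : ℝ) * x.1 * x.2 + (n : ℝ) * x.2 ^ 2)
    (hno1 : ∀ a b : ℤ, m * a ^ 2 + k * a * b + n * b ^ 2 ≠ 1)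
    (ε₁ ε₂ : ℝ)
    (hε : (ε₁, ε₂) = ((1 : ℝ), (1 : ℝ)) ∨ (ε₁, ε₂) = ((-1 : ℝ), (1 : ℝ)) ∨
      (ε₁, ε₂) = ((1 : ℝ), (-1 : ℝ))) :
    ¬ ∃ s : (ℝ × ℝ) →ₗ[ℝ] (ℝ × ℝ) →ₗ[ℝ] ℝ × ℝ,
      (∀ x y : ℝ × ℝ, IsIntVec x → IsIntVec y → IsIntVec (s x y)) ∧
      (∀ x y : ℝ × ℝ, f (s x y) = f x * f y) ∧
      (∀ y : ℝ × ℝ, det2 (fun x => s x y) = ε₁ * f y) ∧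
      (∀ x : ℝ × ℝ, det2 (fun y => s x y) = ε₂ * f x) := by
  rintro ⟨s, hint, hnorm, hdA, hdB⟩
  rcases hε with h | h | h
  · injection h with h1 h2; subst h1; subst h2
    exact core_real m k n hprim hnd f hf hno1 1 (Or.inl rfl) s hint hnorm
      (fun y => by rw [hdA y]; norm_num)
      (fun x => by rw [hdB x]; norm_num)
  · injection h with h1 h2; subst h1; subst h2
    exact core_real m k n hprim hnd f hf hno1 (-1) (Or.inr rfl) s hint hnorm
      (fun y => by rw [hdA y]; norm_num)
      (fun x => by rw [hdB x]; norm_num)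
  · injection h with h1 h2; subst h1; subst h2
    exact core_real m k n hprim hnd f hf hno1 (-1) (Or.inr rfl) s.flip
      (fun x y hx hy => by simpa only [LinearMap.flip_apply] using hint y x hy hx)
      (fun x y => by simp only [LinearMap.flip_apply]; rw [hnorm]; ring)
      (fun y => by simp only [LinearMap.flip_apply]; rw [hdB y]; norm_num)
      (fun x => by simp only [LinearMap.flip_apply]; rw [hdA x]; norm_num)
end

section
/- Let L ⊂ ℂ be a lattice (the ℤ-span of two elements linearly independent over ℝ) that is stable under multiplication: z·w ∈ L for all z, w ∈ L. Then there exist a positive integer r and an element ζ ∈ ℂ with ζ ∉ ℝ such that: ζ² + b·ζ + c = 0 for some b, c ∈ ℤ (so ζ is a quadratic integer and |ζ|² = c); r divides c; and L is the ℤ-span of the two elements (r : ℂ) and ζ. In particular, |z|² ∈ ℤ for every z ∈ L, i.e. L is integer-normed. -/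
/-!
Multiplication by any `w ∈ L` is an endomorphism of `L ≅ ℤ²`, so by Cayley–Hamilton `w` is a root
of a monic integer quadratic. For non-real `w` its constant term is a nonzero integer lying in `L`.
Completing the primitive part of this integer's coordinate vector to a basis of `L` gives a basis
`(f, ζ)` with `f` real; `f² ∈ L` forces `f ∈ ℤ`, and `ζ² ∈ L = ℤf + ℤζ` is the quadratic equation
of `ζ`, whose constant term is a multiple of `f`.
-/

open Complex Submodule

lemma Submodule.span_pair_neg_left {R M : Type*} [Ring R] [AddCommGroup M] [Module R M]
    (x y : M) : span R {-x, y} = span R {x, y} := by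
  rw [span_insert, span_insert, ← Set.neg_singleton, span_neg]

lemma Submodule.exists_span_pair_eq_of_isCoprime {R M : Type*} [CommRing R] [AddCommGroup M]
    [Module R M] {a b : R} (h : IsCoprime a b) (x y : M) :
    ∃ z, span R {a • x + b • y, z} = span R {x, y} := by
  obtain ⟨u, v, huv⟩ := h
  refine ⟨v • x - u • y, le_antisymm ?_ ?_⟩ <;>
    refine span_le.2 (Set.insert_subset_iff.2 ⟨?_, Set.singleton_subset_iff.2 ?_⟩) <;>
    simp only [SetLike.mem_coe, mem_span_pair]
  · exact ⟨a, b, rfl⟩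
  · exact ⟨v, -u, by module⟩
  · exact ⟨u, b, by linear_combination (norm := module) huv • x⟩
  · exact ⟨v, -a, by linear_combination (norm := module) huv • y⟩

lemma Submodule.exists_zsmul_eq_and_span_pair_eq {M : Type*} [AddCommGroup M] {x y m : M}
    (hm : m ∈ span ℤ {x, y}) (hm0 : m ≠ 0) :
    ∃ (g : ℤ) (f₁ f₂ : M), g ≠ 0 ∧ g • f₁ = m ∧ span ℤ {f₁, f₂} = span ℤ {x, y} := by
  obtain ⟨A, B, rfl⟩ := mem_span_pair.1 hm
  have hAB : A ≠ 0 ∨ B ≠ 0 := by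
    by_contra! h
    simp [h] at hm0
  obtain ⟨g, A', B', hg, hcop, rfl, rfl⟩ := Int.exists_gcd_one' (Int.gcd_pos_iff.2 hAB)
  obtain ⟨f₂, hspan⟩ := exists_span_pair_eq_of_isCoprime (Int.isCoprime_iff_gcd_eq_one.2 hcop) x y
  exact ⟨g, _, f₂, by exact_mod_cast hg.ne', by module, hspan⟩

lemma Submodule.coe_span_pair_int {R : Type*} [Ring R] (x y : R) :
    (span ℤ {x, y} : Set R) = {z | ∃ a b : ℤ, z = a * x + b * y} := by
  ext z
  simp [mem_span_pair, zsmul_eq_mul, eq_comm]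

/-- Cayley–Hamilton for the matrix `!![a, b; c, d]` with eigenvector `(e₁, e₂)`. -/
lemma sq_sub_mul_add_eq_zero_of_mul_eq {R : Type*} [CommRing R] [NoZeroDivisors R]
    {e₁ e₂ z a b c d : R} (he : e₁ ≠ 0 ∨ e₂ ≠ 0) (h₁ : z * e₁ = a * e₁ + b * e₂)
    (h₂ : z * e₂ = c * e₁ + d * e₂) : z ^ 2 - (a + d) * z + (a * d - b * c) = 0 := by
  rcases he with he | he
  · refine (mul_eq_zero.1 ?_).resolve_right he
    linear_combination (z - d) * h₁ + b * h₂
  · refine (mul_eq_zero.1 ?_).resolve_right he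
    linear_combination c * h₁ + (z - a) * h₂

namespace Complex

lemma im_ne_zero_or_of_linearIndependent {e₁ e₂ : ℂ} (h : LinearIndependent ℝ ![e₁, e₂]) :
    e₁.im ≠ 0 ∨ e₂.im ≠ 0 := by
  by_contra! him
  have hre := LinearIndependent.pair_iff.1 h e₂.re (-e₁.re)
    (Complex.ext
      (by simp only [real_smul, neg_smul, add_re, mul_re, ofReal_re, ofReal_im, zero_mul, sub_zero,
        neg_re, zero_re]; ring) (by simp [him.1, him.2]))
  exact h.ne_zero 0 (Complex.ext (by simpa using hre.2) (by simpa using him.1))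

lemma normSq_eq_and_two_mul_re_eq_of_sq_add_mul_add_eq_zero {ζ : ℂ} {b c : ℝ} (hζ : ζ.im ≠ 0)
    (h : ζ ^ 2 + b * ζ + c = 0) : normSq ζ = c ∧ 2 * ζ.re = -b := by
  have hre := congrArg re h
  have him := congrArg im h
  simp only [sq, add_re, mul_re, ofReal_re, ofReal_im, zero_mul, sub_zero, zero_re, add_im, mul_im,
    add_zero, zero_im] at hre him
  have hsum : 2 * ζ.re + b = 0 :=
    (mul_eq_zero.1 (by linear_combination him)).resolve_right hζ
  exact ⟨by rw [normSq_apply]; linear_combination ζ.re * hsum - hre, by linarith⟩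

lemma exists_im_eq_of_mem_span_pair {f₁ f₂ z : ℂ} (hz : z ∈ span ℤ {f₁, f₂}) :
    ∃ a b : ℤ, z = a * f₁ + b * f₂ ∧ z.im = a * f₁.im + b * f₂.im := by
  obtain ⟨a, b, rfl⟩ := mem_span_pair.1 hz
  exact ⟨a, b, by simp [zsmul_eq_mul], by simp [zsmul_eq_mul]⟩

lemma exists_eq_intCast_mul_of_mem_span_pair {f₁ ζ z : ℂ} (hf₁ : f₁.im = 0)
    (hζ : ζ.im ≠ 0) (hz : z ∈ span ℤ {f₁, ζ}) (hzim : z.im = 0) : ∃ a : ℤ, z = a * f₁ := by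
  obtain ⟨a, b, rfl, him⟩ := exists_im_eq_of_mem_span_pair hz
  have hb : (b : ℝ) = 0 := (mul_eq_zero.1 (by simpa [hf₁, hzim] using him.symm)).resolve_right hζ
  exact ⟨a, by simp [Int.cast_eq_zero.1 (by exact_mod_cast hb)]⟩

lemma exists_eq_intCast_of_mul_self_mem_span_pair {f₁ ζ : ℂ} (hf₁ : f₁.im = 0)
    (hf₁0 : f₁ ≠ 0) (hζ : ζ.im ≠ 0) (hmem : f₁ * f₁ ∈ span ℤ {f₁, ζ}) : ∃ k : ℤ, f₁ = k := by
  obtain ⟨k, hk⟩ := exists_eq_intCast_mul_of_mem_span_pair hf₁ hζ hmem (by simp [hf₁])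
  exact ⟨k, mul_right_cancel₀ hf₁0 hk⟩

lemma exists_normSq_intCast_add_intCast_mul_eq {ζ : ℂ} {b c : ℤ} (hn : normSq ζ = c)
    (hre : 2 * ζ.re = -b) (x y : ℤ) : ∃ n : ℤ, normSq (x + y * ζ) = n := by
  refine ⟨x ^ 2 - x * y * b + y ^ 2 * c, ?_⟩
  rw [normSq_apply] at hn ⊢
  simp only [add_re, add_im, intCast_re, intCast_im, mul_re, mul_im]
  push_cast
  linear_combination (y : ℝ) ^ 2 * hn + x * y * hre

end Complex

section MulClosed

variable {e₁ e₂ : ℂ} (hmul : ∀ z ∈ span ℤ {e₁, e₂}, ∀ w ∈ span ℤ {e₁, e₂}, z * w ∈ span ℤ {e₁, e₂})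
include hmul

lemma exists_intCast_mem_span_pair {w : ℂ} (hw : w ∈ span ℤ {e₁, e₂}) (hwim : w.im ≠ 0) :
    ∃ m : ℤ, m ≠ 0 ∧ (m : ℂ) ∈ span ℤ {e₁, e₂} := by
  have hw0 : w ≠ 0 := fun h => hwim (by simp [h])
  have he : e₁ ≠ 0 ∨ e₂ ≠ 0 := by
    by_contra! h
    simp [h] at hw
    exact hw0 hw
  obtain ⟨a, b, hab⟩ := mem_span_pair.1 (hmul w hw e₁ (subset_span (by simp)))
  obtain ⟨c, d, hcd⟩ := mem_span_pair.1 (hmul w hw e₂ (subset_span (by simp)))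
  simp only [zsmul_eq_mul] at hab hcd
  have hchar := sq_sub_mul_add_eq_zero_of_mul_eq he hab.symm hcd.symm
  refine ⟨a * d - b * c, fun h0 => hwim ?_, ?_⟩
  · have h0' : (a * d - b * c : ℂ) = 0 := by exact_mod_cast h0
    have hfactor : w * (w - (a + d)) = 0 := by linear_combination hchar - h0'
    rw [(mul_eq_zero.1 hfactor).resolve_left hw0 |> sub_eq_zero.1]
    simp
  · have hdet : ((a * d - b * c : ℤ) : ℂ) = (a + d : ℤ) • w - w * w := by
      push_cast [zsmul_eq_mul]; linear_combination hchar
    rw [hdet]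
    exact sub_mem (zsmul_mem hw _) (hmul w hw w hw)

lemma exists_span_pair_intCast_eq (hli : LinearIndependent ℝ ![e₁, e₂]) :
    ∃ (k : ℤ) (ζ : ℂ), k ≠ 0 ∧ ζ.im ≠ 0 ∧ span ℤ {(k : ℂ), ζ} = span ℤ {e₁, e₂} := by
  obtain ⟨w, hw, hwim⟩ : ∃ w ∈ span ℤ {e₁, e₂}, w.im ≠ 0 := by
    rcases im_ne_zero_or_of_linearIndependent hli with h | h
    · exact ⟨e₁, subset_span (by simp), h⟩
    · exact ⟨e₂, subset_span (by simp), h⟩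
  obtain ⟨m, hm0, hm⟩ := exists_intCast_mem_span_pair hmul hw hwim
  obtain ⟨g, f₁, ζ, hg, hgf, hspan⟩ :=
    exists_zsmul_eq_and_span_pair_eq hm (by exact_mod_cast hm0)
  rw [← hspan] at hmul hw
  have hf₁ : f₁.im = 0 := by
    simpa [zsmul_eq_mul, hg] using congrArg im hgf
  have hf₁0 : f₁ ≠ 0 := by
    rintro rfl
    exact hm0 (by exact_mod_cast hgf.symm.trans (smul_zero g))
  have hζ : ζ.im ≠ 0 := by
    intro hζ
    obtain ⟨a, b, -, him⟩ := exists_im_eq_of_mem_span_pair hw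
    exact hwim (by simp [him, hf₁, hζ])
  obtain ⟨k, rfl⟩ := exists_eq_intCast_of_mul_self_mem_span_pair hf₁ hf₁0 hζ
    (hmul _ (subset_span (by simp)) _ (subset_span (by simp)))
  exact ⟨k, ζ, by rintro rfl; simp at hf₁0, hζ, hspan⟩

end MulClosed

/-- A lattice in `ℂ` stable under multiplication is generated by a positive
integer `r` and a quadratic integer `ζ` with `r ∣ |ζ|²`; in particular it is
integer-normed. -/
theorem stmt9 (e₁ e₂ : ℂ) (hli : LinearIndependent ℝ ![e₁, e₂])
    (L : Set ℂ) (hL : L = {z : ℂ | ∃ a b : ℤ, z = (a : ℂ) * e₁ + (b : ℂ) * e₂})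
    (hmul : ∀ z ∈ L, ∀ w ∈ L, z * w ∈ L) :
    ∃ (r : ℤ) (ζ : ℂ) (b c : ℤ), 0 < r ∧
      ζ ∉ Set.range ((↑) : ℝ → ℂ) ∧
      ζ ^ 2 + (b : ℂ) * ζ + (c : ℂ) = 0 ∧
      Complex.normSq ζ = (c : ℝ) ∧
      r ∣ c ∧
      L = {z : ℂ | ∃ a b' : ℤ, z = (a : ℂ) * (r : ℂ) + (b' : ℂ) * ζ} ∧
      ∀ z ∈ L, ∃ nz : ℤ, Complex.normSq z = (nz : ℝ) := by
  subst hL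
  rw [← coe_span_pair_int] at hmul ⊢
  obtain ⟨k, ζ, hk, hζ, hspan⟩ := exists_span_pair_intCast_eq hmul hli
  have hspan' : span ℤ {((|k| : ℤ) : ℂ), ζ} = span ℤ {e₁, e₂} := by
    rcases abs_choice k with h | h <;> simp [h, span_pair_neg_left, hspan]
  rw [← hspan'] at hmul ⊢
  obtain ⟨n, n', hζsq⟩ := mem_span_pair.1 (hmul ζ (subset_span (by simp)) ζ (subset_span (by simp)))
  have hquad : ζ ^ 2 + ((-n' : ℤ) : ℂ) * ζ + ((-(n * |k|) : ℤ) : ℂ) = 0 := by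
    simp only [zsmul_eq_mul] at hζsq
    push_cast
    linear_combination -hζsq
  obtain ⟨hnorm, hre⟩ := normSq_eq_and_two_mul_re_eq_of_sq_add_mul_add_eq_zero hζ
    (by exact_mod_cast hquad)
  refine ⟨|k|, ζ, _, _, abs_pos.2 hk, fun ⟨x, hx⟩ => hζ (hx ▸ ofReal_im x), hquad, hnorm,
    dvd_neg.2 (dvd_mul_left _ _), coe_span_pair_int _ _, ?_⟩
  rintro z hz
  obtain ⟨a, b, rfl⟩ := (Set.ext_iff.1 (coe_span_pair_int _ _) z).1 hz
  simpa using exists_normSq_intCast_add_intCast_mul_eq hnorm (by exact_mod_cast hre) (a * |k|) b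
end

section
/- Let L ⊂ ℂ be a lattice (the ℤ-span of two elements linearly independent over ℝ) such that either conj(z)·w ∈ L for all z, w ∈ L, or z·conj(w) ∈ L for all z, w ∈ L. Then there exist a positive integer r and an element ζ ∈ ℂ with ζ ∉ ℝ such that: ζ² + b·ζ + c = 0 for some b, c ∈ ℤ (so ζ is a quadratic integer and |ζ|² = c); r divides c; and L is the ℤ-span of the two elements (r : ℂ) and ζ. In particular, |z|² ∈ ℤ for every z ∈ L, i.e. L is integer-normed. -/
/-!
Stability under `(z, w) ↦ z̄ w` puts `|z|² = z̄ z` and `r (z + z̄) = r̄ z + z̄ r` in `L` whenever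
`z, r ∈ L`. As `x e₁ ∈ L` with `x` real forces `x ∈ ℤ`, the real points of `L` are integers; they
form `rℤ` for some `r > 0`, which makes norms and traces `z + z̄` integral and `r ∣ |ζ|²` for all
`ζ ∈ L`. The imaginary part of `|e₁|² = a e₁ + b e₂` is an integer relation between `Im e₁` and
`Im e₂`, so `Im L` is cyclic, and any `ζ ∈ L` whose imaginary part generates it satisfies
`L = ℤ r + ℤ ζ` and `ζ² - (ζ + ζ̄) ζ + |ζ|² = 0`.
-/

open ComplexConjugate

theorem AddSubgroup.exists_closure_pair_eq_zmultiples {G : Type*} [AddCommGroup G]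
    [IsAddTorsionFree G] {x y : G} {a b : ℤ} (hab : a ≠ 0 ∨ b ≠ 0) (hrel : a • x + b • y = 0) :
    ∃ t, closure {x, y} = zmultiples t := by
  obtain ⟨g, a', b', hg, hcop, rfl, rfl⟩ := Int.exists_gcd_one' (Int.gcd_pos_iff.2 hab)
  obtain ⟨u, v, huv⟩ := Int.isCoprime_iff_gcd_eq_one.2 hcop
  have hrel' : a' • x + b' • y = 0 := by
    rw [← zsmul_right_inj (Int.natCast_ne_zero.2 hg.ne'), smul_zero, ← hrel]
    module
  have hx : x = b' • (v • x - u • y) := by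
    linear_combination (norm := module) u • hrel' - huv • x
  have hy : y = -a' • (v • x - u • y) := by
    linear_combination (norm := module) v • hrel' - huv • y
  refine ⟨v • x - u • y, le_antisymm ?_ ?_⟩
  · rw [closure_le, Set.pair_subset_iff]
    exact ⟨⟨b', hx.symm⟩, ⟨-a', hy.symm⟩⟩
  · exact zmultiples_le.2 (sub_mem (zsmul_mem (subset_closure (by simp)) _)
      (zsmul_mem (subset_closure (by simp)) _))

namespace Complex

section RealPoints

variable {L : AddSubgroup ℂ}

theorem exists_pos_ofReal_mem_iff (hreal : ∀ x : ℝ, (x : ℂ) ∈ L → ∃ n : ℤ, x = n)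
    {x₀ : ℝ} (hx₀ : x₀ ≠ 0) (hx₀L : (x₀ : ℂ) ∈ L) :
    ∃ r : ℤ, 0 < r ∧ ∀ x : ℝ, (x : ℂ) ∈ L ↔ ∃ n : ℤ, x = n * r := by
  obtain ⟨r₀, hH⟩ := Int.subgroup_cyclic (L.comap (Int.castAddHom ℂ))
  rw [← AddSubgroup.zmultiples_eq_closure, ← Int.zmultiples_natAbs] at hH
  have hmem (k : ℤ) : (k : ℂ) ∈ L ↔ (r₀.natAbs : ℤ) ∣ k := by
    rw [← Int.mem_zmultiples_iff, ← hH]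
    rfl
  obtain ⟨k, rfl⟩ := hreal x₀ hx₀L
  refine ⟨r₀.natAbs, ?_, fun x => ⟨fun hx => ?_, ?_⟩⟩
  · have hk : k ≠ 0 := by
      rintro rfl
      simp at hx₀
    refine Int.natCast_pos.2 (Int.natAbs_pos.2 fun h => hk ?_)
    simpa [h] using (hmem k).1 (by exact_mod_cast hx₀L)
  · obtain ⟨n, rfl⟩ := hreal x hx
    obtain ⟨m, rfl⟩ := (hmem n).1 (by exact_mod_cast hx)
    exact ⟨m, by push_cast; ring⟩
  · rintro ⟨n, rfl⟩
    exact_mod_cast (hmem (n * r₀.natAbs)).2 (dvd_mul_left _ _)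

variable {r : ℤ} (hr : ∀ x : ℝ, (x : ℂ) ∈ L ↔ ∃ n : ℤ, x = n * r)
include hr

theorem coe_eq_setOf_intCast_mul_add {ζ : ℂ} (hζ : ζ ∈ L)
    (him : ∀ z ∈ L, ∃ k : ℤ, z.im = k * ζ.im) :
    (L : Set ℂ) = {z | ∃ a b : ℤ, z = a * r + b * ζ} := by
  have hrL : (r : ℂ) ∈ L := by exact_mod_cast (hr r).2 ⟨1, by simp⟩
  ext z
  refine ⟨fun hz => ?_, ?_⟩
  · obtain ⟨k, hk⟩ := him z hz
    have hreal : ((z - k * ζ).re : ℂ) = z - k * ζ := Complex.ext (by simp) (by simp [hk])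
    have hmem : z - k * ζ ∈ L := sub_mem hz (by simpa using zsmul_mem hζ k)
    obtain ⟨n, hn⟩ := (hr _).1 (hreal ▸ hmem)
    refine ⟨n, k, ?_⟩
    rw [← sub_eq_iff_eq_add, ← hreal, hn]
    push_cast
    ring
  · rintro ⟨a, b, rfl⟩
    exact add_mem (by simpa using zsmul_mem hrL a) (by simpa using zsmul_mem hζ b)

theorem exists_add_conj_eq_intCast (hr₀ : r ≠ 0) (hL : ∀ z ∈ L, ∀ w ∈ L, conj z * w ∈ L)
    {z : ℂ} (hz : z ∈ L) : ∃ n : ℤ, z + conj z = n := by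
  have hrL : (r : ℂ) ∈ L := by exact_mod_cast (hr r).2 ⟨1, by simp⟩
  have hmem : ((r * (2 * z.re) : ℝ) : ℂ) ∈ L := by
    have := add_mem (hL _ hrL z hz) (hL z hz _ hrL)
    rw [map_intCast, mul_comm (conj z), ← mul_add, add_conj] at this
    exact_mod_cast this
  obtain ⟨n, hn⟩ := (hr _).1 hmem
  refine ⟨n, ?_⟩
  have : (2 * z.re : ℝ) = n := by
    apply mul_left_cancel₀ (Int.cast_ne_zero.2 hr₀ : (r : ℝ) ≠ 0)
    rw [hn]
    ring
  rw [add_conj]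
  exact_mod_cast this

end RealPoints

section ConjMulStable

variable {L : AddSubgroup ℂ} (hL : ∀ z ∈ L, ∀ w ∈ L, conj z * w ∈ L)
include hL

theorem normSq_mem {z : ℂ} (hz : z ∈ L) : (normSq z : ℂ) ∈ L := by
  rw [normSq_eq_conj_mul_self]
  exact hL z hz z hz

theorem exists_intCast_eq_of_ofReal_mem {e : ℂ} (he : e ∈ L)
    (hdisc : ∀ x : ℝ, (x : ℂ) * e ∈ L → ∃ n : ℤ, x = n) (x : ℝ) (hx : (x : ℂ) ∈ L) :
    ∃ n : ℤ, x = n :=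
  hdisc x (by simpa using hL _ hx e he)

end ConjMulStable

theorem not_linearIndependent_of_im_eq_zero {e₁ e₂ : ℂ} (h₁ : e₁.im = 0) (h₂ : e₂.im = 0) :
    ¬LinearIndependent ℝ ![e₁, e₂] := by
  intro hli
  have hre : e₂.re = 0 ∧ -e₁.re = 0 :=
    LinearIndependent.pair_iff.1 hli _ _ (Complex.ext (by simp; ring) (by simp [h₁, h₂]))
  have he₁ : e₁ = 0 := Complex.ext (by simpa using hre.2) h₁
  exact one_ne_zero (LinearIndependent.pair_iff.1 hli 1 0 (by simp [he₁])).1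

section Lattice

variable {e₁ e₂ : ℂ}

theorem setOf_intCast_mul_add_eq_closure (e₁ e₂ : ℂ) :
    {z : ℂ | ∃ a b : ℤ, z = a * e₁ + b * e₂} = AddSubgroup.closure {e₁, e₂} := by
  ext z
  simp [AddSubgroup.mem_closure_pair, zsmul_eq_mul, eq_comm]

theorem exists_intCast_eq_of_ofReal_mul_mem_closure_pair (hli : LinearIndependent ℝ ![e₁, e₂])
    (x : ℝ) (hx : (x : ℂ) * e₁ ∈ AddSubgroup.closure {e₁, e₂}) : ∃ n : ℤ, x = n := by
  obtain ⟨m, n, h⟩ := AddSubgroup.mem_closure_pair.1 hx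
  have hrel : (x - m) • e₁ + (-n : ℝ) • e₂ = 0 := by
    rw [zsmul_eq_mul, zsmul_eq_mul] at h
    simp only [real_smul]
    push_cast
    linear_combination -h
  exact ⟨m, sub_eq_zero.1 (LinearIndependent.pair_iff.1 hli _ _ hrel).1⟩

theorem exists_mem_closure_pair_im_generates (hli : LinearIndependent ℝ ![e₁, e₂]) {x : ℝ}
    (hx₀ : x ≠ 0) (hx : (x : ℂ) ∈ AddSubgroup.closure {e₁, e₂}) :
    ∃ ζ ∈ AddSubgroup.closure {e₁, e₂}, ζ.im ≠ 0 ∧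
      ∀ z ∈ AddSubgroup.closure {e₁, e₂}, ∃ k : ℤ, z.im = k * ζ.im := by
  obtain ⟨a, b, hab⟩ := AddSubgroup.mem_closure_pair.1 hx
  have hab₀ : a ≠ 0 ∨ b ≠ 0 := by
    by_contra! h
    apply hx₀
    simpa [h.1, h.2, eq_comm] using hab
  have hrel : a • e₁.im + b • e₂.im = 0 := by
    simpa using congrArg im hab
  obtain ⟨t, ht⟩ := AddSubgroup.exists_closure_pair_eq_zmultiples hab₀ hrel
  have him : (AddSubgroup.closure {e₁, e₂}).map imAddGroupHom = AddSubgroup.zmultiples t := by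
    rw [AddMonoidHom.map_closure, Set.image_pair, ← ht]
    rfl
  obtain ⟨ζ, hζ, rfl⟩ := AddSubgroup.mem_map.1 (him ▸ AddSubgroup.mem_zmultiples t)
  refine ⟨ζ, hζ, fun h => ?_, fun z hz => ?_⟩
  · simp only [coe_imAddGroupHom, h, AddSubgroup.zmultiples_zero_eq_bot] at ht
    rw [AddSubgroup.closure_eq_bot_iff, Set.pair_subset_iff] at ht
    exact not_linearIndependent_of_im_eq_zero ht.1 ht.2 hli
  · obtain ⟨k, hk⟩ := AddSubgroup.mem_zmultiples_iff.1 (him ▸ AddSubgroup.mem_map_of_mem _ hz)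
    exact ⟨k, by simpa [eq_comm] using hk⟩

end Lattice

end Complex

open Complex

/-- A lattice in `ℂ` stable under `σ₂(z,w) = z̄w` or under `σ₃(z,w) = zw̄` is
generated by a positive integer `r` and a quadratic integer `ζ` with `r ∣ |ζ|²`;
in particular it is integer-normed. -/
theorem stmt10 (e₁ e₂ : ℂ) (hli : LinearIndependent ℝ ![e₁, e₂])
    (L : Set ℂ) (hL : L = {z : ℂ | ∃ a b : ℤ, z = (a : ℂ) * e₁ + (b : ℂ) * e₂})
    (hstab : (∀ z ∈ L, ∀ w ∈ L, (starRingEnd ℂ) z * w ∈ L) ∨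
             (∀ z ∈ L, ∀ w ∈ L, z * (starRingEnd ℂ) w ∈ L)) :
    ∃ (r : ℤ) (ζ : ℂ) (b c : ℤ), 0 < r ∧
      ζ ∉ Set.range ((↑) : ℝ → ℂ) ∧
      ζ ^ 2 + (b : ℂ) * ζ + (c : ℂ) = 0 ∧
      Complex.normSq ζ = (c : ℝ) ∧
      r ∣ c ∧
      L = {z : ℂ | ∃ a b' : ℤ, z = (a : ℂ) * (r : ℂ) + (b' : ℂ) * ζ} ∧
      ∀ z ∈ L, ∃ nz : ℤ, Complex.normSq z = (nz : ℝ) := by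
  rw [setOf_intCast_mul_add_eq_closure] at hL
  subst hL
  set Λ := AddSubgroup.closure ({e₁, e₂} : Set ℂ)
  have hσ : ∀ z ∈ Λ, ∀ w ∈ Λ, conj z * w ∈ Λ :=
    hstab.elim id fun h z hz w hw => mul_comm w (conj z) ▸ h w hw z hz
  have he₁ : e₁ ∈ Λ := AddSubgroup.subset_closure (by simp)
  have hN : normSq e₁ ≠ 0 := normSq_eq_zero.not.2 (hli.ne_zero 0)
  obtain ⟨r, hr₀, hr⟩ := exists_pos_ofReal_mem_iff
    (exists_intCast_eq_of_ofReal_mem hσ he₁ (exists_intCast_eq_of_ofReal_mul_mem_closure_pair hli))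
    hN (normSq_mem hσ he₁)
  obtain ⟨ζ, hζ, hζim, him⟩ := exists_mem_closure_pair_im_generates hli hN (normSq_mem hσ he₁)
  obtain ⟨n, hn⟩ := exists_add_conj_eq_intCast hr hr₀.ne' hσ hζ
  obtain ⟨m, hm⟩ := (hr _).1 (normSq_mem hσ hζ)
  refine ⟨r, ζ, -n, m * r, hr₀, ?_, ?_, by exact_mod_cast hm, dvd_mul_left r m,
    coe_eq_setOf_intCast_mul_add hr hζ him, fun z hz => ?_⟩
  · rintro ⟨x, rfl⟩
    exact hζim (ofReal_im x)
  · have hnorm : ζ * conj ζ = m * r := by rw [mul_conj, hm]; norm_cast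
    push_cast
    linear_combination ζ * hn - hnorm
  · obtain ⟨k, hk⟩ := (hr _).1 (normSq_mem hσ hz)
    exact ⟨k * r, by exact_mod_cast hk⟩
end

section
/- Let L ⊂ ℂ be a lattice (the ℤ-span of two elements linearly independent over ℝ). Suppose L is stable under at least one of the three operations σ₁(z,w) = z·w, σ₂(z,w) = conj(z)·w, σ₃(z,w) = z·conj(w). Then L is stable under all three of these operations, and L is integer-normed: |z|² ∈ ℤ for every z ∈ L. -/
private lemma indep_aux {e₁ e₂ : ℂ} (hli : LinearIndependent ℝ ![e₁, e₂]) (a b : ℝ)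
    (h : (a : ℂ) * e₁ + (b : ℂ) * e₂ = 0) : a = 0 ∧ b = 0 := by
  have h2 := Fintype.linearIndependent_iff.mp hli ![a, b] (by
    rw [Fin.sum_univ_two]
    simp only [Matrix.cons_val_zero, Matrix.cons_val_one, Matrix.head_cons,
      Complex.real_smul]
    exact h)
  exact ⟨h2 0, h2 1⟩

private lemma keyA {e₁ e₂ : ℂ} (hli : LinearIndependent ℝ ![e₁, e₂])
    {L : Set ℂ} (hL : L = {z : ℂ | ∃ a b : ℤ, z = (a : ℂ) * e₁ + (b : ℂ) * e₂})
    {c : ℂ} (h : ∀ w ∈ L, c * w ∈ L) :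
    ∃ t n : ℤ, (starRingEnd ℂ) c = (t : ℂ) - c ∧ Complex.normSq c = (n : ℝ) := by
  have he₁ : e₁ ∈ L := by rw [hL]; exact ⟨1, 0, by push_cast; ring⟩
  have he₂ : e₂ ∈ L := by rw [hL]; exact ⟨0, 1, by push_cast; ring⟩
  have h1 := h e₁ he₁
  have h2 := h e₂ he₂
  rw [hL] at h1 h2
  obtain ⟨p, q, hpq⟩ := h1
  obtain ⟨r, s, hrs⟩ := h2
  -- e₁ e₂ ≠ 0
  have he₁0 : e₁ ≠ 0 := by
    intro h0
    have := (indep_aux hli 1 0 (by rw [h0]; push_cast; ring)).1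
    norm_num at this
  have he₂0 : e₂ ≠ 0 := by
    intro h0
    have := (indep_aux hli 0 1 (by rw [h0]; push_cast; ring)).2
    norm_num at this
  have hprod : ((c - p) * (c - s)) * (e₁ * e₂) = ((q : ℂ) * r) * (e₁ * e₂) := by
    linear_combination ((c - (s:ℂ)) * e₂) * hpq + ((q : ℂ) * e₂) * hrs
  have hquad : (c - p) * (c - s) = (q : ℂ) * r :=
    mul_right_cancel₀ (mul_ne_zero he₁0 he₂0) hprod
  by_cases hc : (starRingEnd ℂ) c = c
  · -- c is real
    have hcre : (c.re : ℂ) = c := Complex.conj_eq_iff_re.mp hc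
    have h0 : ((c.re - (p:ℝ)) : ℂ) * e₁ + ((-(q:ℝ)) : ℂ) * e₂ = 0 := by
      push_cast
      linear_combination hpq + e₁ * hcre
    obtain ⟨ha, hb⟩ := indep_aux hli _ _ (by exact_mod_cast h0)
    have hcp : c = ((p : ℤ) : ℂ) := by
      rw [← hcre]
      norm_cast
      linarith
    refine ⟨2 * p, p * p, ?_, ?_⟩
    · rw [hc, hcp]; push_cast; ring
    · rw [hcp]
      rw [show (((p:ℤ):ℂ)) = (((p:ℤ):ℝ):ℂ) by push_cast; ring, Complex.normSq_ofReal]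
      push_cast; ring
  · -- c is not real
    have hquadc : ((starRingEnd ℂ) c - p) * ((starRingEnd ℂ) c - s) = (q : ℂ) * r := by
      have := congrArg (starRingEnd ℂ) hquad
      simpa using this
    have h0 : (c - (starRingEnd ℂ) c) * (c + (starRingEnd ℂ) c - ((p : ℂ) + s)) = 0 := by
      linear_combination hquad - hquadc
    have hsum : c + (starRingEnd ℂ) c = (p : ℂ) + s := by
      rcases mul_eq_zero.mp h0 with h' | h'
      · exact absurd (by linear_combination -h') hc
      · linear_combination h'
    have hconj : (starRingEnd ℂ) c = ((p + s : ℤ) : ℂ) - c := by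
      push_cast; linear_combination hsum
    refine ⟨p + s, p * s - q * r, hconj, ?_⟩
    have hcc : ((Complex.normSq c : ℝ) : ℂ) = ((p * s - q * r : ℤ) : ℂ) := by
      rw [← Complex.mul_conj]
      push_cast
      push_cast at hconj
      linear_combination c * hconj - hquad
    exact_mod_cast hcc

/-- If a lattice in `ℂ` is stable under one of the operations `σ₁(z,w) = zw`,
`σ₂(z,w) = z̄w`, `σ₃(z,w) = zw̄`, then it is stable under all three, and it is
integer-normed. -/
theorem stmt11 (e₁ e₂ : ℂ) (hli : LinearIndependent ℝ ![e₁, e₂])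
    (L : Set ℂ) (hL : L = {z : ℂ | ∃ a b : ℤ, z = (a : ℂ) * e₁ + (b : ℂ) * e₂})
    (hstab : (∀ z ∈ L, ∀ w ∈ L, z * w ∈ L) ∨
             (∀ z ∈ L, ∀ w ∈ L, (starRingEnd ℂ) z * w ∈ L) ∨
             (∀ z ∈ L, ∀ w ∈ L, z * (starRingEnd ℂ) w ∈ L)) :
    (∀ z ∈ L, ∀ w ∈ L, z * w ∈ L) ∧
    (∀ z ∈ L, ∀ w ∈ L, (starRingEnd ℂ) z * w ∈ L) ∧
    (∀ z ∈ L, ∀ w ∈ L, z * (starRingEnd ℂ) w ∈ L) ∧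
    (∀ z ∈ L, ∃ nz : ℤ, Complex.normSq z = (nz : ℝ)) := by
  -- closure of L under (t : ℤ) * x - y
  have hclose : ∀ (t : ℤ) (x : ℂ), x ∈ L → ∀ y ∈ L, (t : ℂ) * x - y ∈ L := by
    intro t x hx y hy
    rw [hL] at hx hy ⊢
    obtain ⟨a, b, hab⟩ := hx
    obtain ⟨a', b', hab'⟩ := hy
    exact ⟨t * a - a', t * b - b', by rw [hab, hab']; push_cast; ring⟩
  -- first establish σ₁-stability
  have H1 : ∀ z ∈ L, ∀ w ∈ L, z * w ∈ L := by
    rcases hstab with h | h | h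
    · exact h
    · -- σ₂-stable
      intro z hz w hw
      obtain ⟨t, n, ht, -⟩ := keyA hli hL (fun u hu => h z hz u hu)
      rw [Complex.conj_conj] at ht
      have hzw : z * w = (t : ℂ) * w - (starRingEnd ℂ) z * w := by
        linear_combination w * ht
      rw [hzw]
      exact hclose t w hw _ (h z hz w hw)
    · -- σ₃-stable
      intro z hz w hw
      have h' : ∀ u ∈ L, (starRingEnd ℂ) w * u ∈ L := by
        intro u hu
        rw [mul_comm]
        exact h u hu w hw
      obtain ⟨t, n, ht, -⟩ := keyA hli hL h'
      rw [Complex.conj_conj] at ht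
      have hzw : z * w = (t : ℂ) * z - z * (starRingEnd ℂ) w := by
        linear_combination z * ht
      rw [hzw]
      exact hclose t z hz _ (h z hz w hw)
  refine ⟨H1, ?_, ?_, ?_⟩
  · -- σ₂ from σ₁
    intro z hz w hw
    obtain ⟨t, n, ht, -⟩ := keyA hli hL (fun u hu => H1 z hz u hu)
    have : (starRingEnd ℂ) z * w = (t : ℂ) * w - z * w := by
      linear_combination w * ht
    rw [this]
    exact hclose t w hw _ (H1 z hz w hw)
  · -- σ₃ from σ₁
    intro z hz w hw
    obtain ⟨t, n, ht, -⟩ := keyA hli hL (fun u hu => H1 w hw u hu)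
    have : z * (starRingEnd ℂ) w = (t : ℂ) * z - z * w := by
      linear_combination z * ht
    rw [this]
    exact hclose t z hz _ (H1 z hz w hw)
  · -- integer-normed
    intro z hz
    obtain ⟨t, n, -, hn⟩ := keyA hli hL (fun u hu => H1 z hz u hu)
    exact ⟨n, hn⟩
end

section
/- Let A be a 2×2 integer matrix and let r ∈ ℤ divide det(A). Let Λ be the ℤ-submodule of the 2×2 integer matrices spanned by A and r·E, where E is the identity matrix. Then Λ is stable under the three pairings S₁(X,Y) = X·Y, S₂(X,Y) = adj(X)·Y, and S₃(X,Y) = X·adj(Y): for all X, Y ∈ Λ, the matrices X·Y, adj(X)·Y, and X·adj(Y) all lie in Λ. -/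
lemma adj_fin_two' (X : Matrix (Fin 2) (Fin 2) ℤ) :
    X.adjugate = X.trace • (1 : Matrix (Fin 2) (Fin 2) ℤ) - X := by
  ext i j
  fin_cases i <;> fin_cases j <;>
    simp [Matrix.adjugate_fin_two, Matrix.trace_fin_two, Matrix.one_apply, Matrix.smul_apply,
      smul_eq_mul, Matrix.sub_apply, ← Matrix.diagonal_intCast, Matrix.diagonal_apply]

lemma sq_fin_two' (A : Matrix (Fin 2) (Fin 2) ℤ) :
    A * A = A.trace • A - A.det • (1 : Matrix (Fin 2) (Fin 2) ℤ) := by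
  ext i j
  fin_cases i <;> fin_cases j <;>
    simp [Matrix.mul_apply, Fin.sum_univ_two, Matrix.trace_fin_two,
      Matrix.det_fin_two, Matrix.one_apply, Matrix.smul_apply, smul_eq_mul, Matrix.sub_apply,
      ← Matrix.diagonal_intCast, Matrix.diagonal_apply] <;> ring

/-- If `A` is an integer `2×2` matrix and `r` divides `det A`, then the ℤ-span of
`A` and `r·E` in `Mat₂(ℤ)` is stable under the pairings `S₁(X,Y) = XY`,
`S₂(X,Y) = adj(X)·Y` and `S₃(X,Y) = X·adj(Y)`. -/
theorem stmt14 (A : Matrix (Fin 2) (Fin 2) ℤ) (r : ℤ) (hr : r ∣ A.det)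
    (Λ : Submodule ℤ (Matrix (Fin 2) (Fin 2) ℤ))
    (hΛ : Λ = Submodule.span ℤ {A, r • (1 : Matrix (Fin 2) (Fin 2) ℤ)}) :
    ∀ X ∈ Λ, ∀ Y ∈ Λ,
      X * Y ∈ Λ ∧ X.adjugate * Y ∈ Λ ∧ X * Y.adjugate ∈ Λ := by
  obtain ⟨m, hm⟩ := hr
  intro X hX Y hY
  rw [hΛ, Submodule.mem_span_pair] at hX hY
  obtain ⟨a, b, rfl⟩ := hX
  obtain ⟨c, d, rfl⟩ := hY
  set X := a • A + b • (r • (1 : Matrix (Fin 2) (Fin 2) ℤ)) with hXdef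
  set Y := c • A + d • (r • (1 : Matrix (Fin 2) (Fin 2) ℤ)) with hYdef
  have hXmem : X ∈ Λ := by
    rw [hΛ, Submodule.mem_span_pair]; exact ⟨a, b, rfl⟩
  have hYmem : Y ∈ Λ := by
    rw [hΛ, Submodule.mem_span_pair]; exact ⟨c, d, rfl⟩
  have hmul : X * Y = (a * c * A.trace + a * d * r + b * c * r) • A +
      (b * d * r - a * c * m) • (r • (1 : Matrix (Fin 2) (Fin 2) ℤ)) := by
    rw [hXdef, hYdef]
    have h2 := sq_fin_two' A
    rw [hm] at h2
    simp only [add_mul, mul_add, smul_mul_assoc, mul_smul_comm, h2, one_mul, mul_one,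
      smul_smul, smul_sub, smul_add, sub_smul, add_smul]
    module
  have hmulmem : X * Y ∈ Λ := by
    rw [hΛ, Submodule.mem_span_pair]
    exact ⟨_, _, hmul.symm⟩
  refine ⟨hmulmem, ?_, ?_⟩
  · have : X.adjugate * Y = X.trace • Y - X * Y := by
      rw [adj_fin_two', sub_mul, smul_mul_assoc, one_mul]
    rw [this]
    exact Submodule.sub_mem Λ (Submodule.smul_mem Λ _ hYmem) hmulmem
  · have : X * Y.adjugate = Y.trace • X - X * Y := by
      rw [adj_fin_two', mul_sub, mul_smul_comm, mul_one]
    rw [this]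
    exact Submodule.sub_mem Λ (Submodule.smul_mem Λ _ hXmem) hmulmem
end

section
/- Let Λ be a 2-dimensional sublattice of the 2×2 integer matrices, i.e. a ℤ-submodule spanned by two ℤ-linearly independent matrices. Suppose Λ is non-null (it contains a matrix of nonzero determinant) and is stable under one of the pairings S₁(X,Y) = X·Y, S₂(X,Y) = adj(X)·Y, S₃(X,Y) = X·adj(Y). Then there exist an integer matrix A and an integer r such that r divides det(A) and Λ is the ℤ-span of A and r·E, where E is the identity matrix. -/
/-!
For 2×2 matrices `adj X = tr X • E - X`, so stability under `S₂` or `S₃` implies stability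
under `S₁`, and then Cayley–Hamilton, `det X • E = tr X • X - X²`, puts `det X • E` into `Λ`
for every `X ∈ Λ`. A matrix of nonzero determinant thus gives a nonzero scalar matrix in `Λ`;
dividing its coordinates in the basis `B, C` by their gcd gives a primitive vector `s • E`,
which extends to a basis `A, s • E` of `Λ`. Finally `det A • E ∈ ℤA + ℤ(s • E)`, and as `A` is
not scalar its coefficient must vanish, so `s ∣ det A`.
-/

open Matrix Submodule

namespace Matrix

variable {R : Type*} [CommRing R]

theorem adjugate_fin_two_eq_trace_smul_one_sub (X : Matrix (Fin 2) (Fin 2) R) :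
    X.adjugate = X.trace • (1 : Matrix (Fin 2) (Fin 2) R) - X := by
  ext i j
  fin_cases i <;> fin_cases j <;> simp [adjugate_fin_two, trace_fin_two]

theorem det_smul_one_fin_two (X : Matrix (Fin 2) (Fin 2) R) :
    X.det • (1 : Matrix (Fin 2) (Fin 2) R) = X.trace • X - X * X := by
  rw [← mul_adjugate, adjugate_fin_two_eq_trace_smul_one_sub, mul_sub, Matrix.mul_smul, mul_one]

variable {Λ : Submodule R (Matrix (Fin 2) (Fin 2) R)}

theorem mul_mem_of_adjugate_mul_mem (h : ∀ X ∈ Λ, ∀ Y ∈ Λ, X.adjugate * Y ∈ Λ) :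
    ∀ X ∈ Λ, ∀ Y ∈ Λ, X * Y ∈ Λ := by
  intro X hX Y hY
  have e : X * Y = X.trace • Y - X.adjugate * Y := by
    rw [adjugate_fin_two_eq_trace_smul_one_sub, sub_mul, Matrix.smul_mul, one_mul, sub_sub_cancel]
  exact e ▸ sub_mem (smul_mem _ _ hY) (h X hX Y hY)

theorem mul_mem_of_mul_adjugate_mem (h : ∀ X ∈ Λ, ∀ Y ∈ Λ, X * Y.adjugate ∈ Λ) :
    ∀ X ∈ Λ, ∀ Y ∈ Λ, X * Y ∈ Λ := by
  intro X hX Y hY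
  have e : X * Y = Y.trace • X - X * Y.adjugate := by
    rw [adjugate_fin_two_eq_trace_smul_one_sub, mul_sub, Matrix.mul_smul, mul_one, sub_sub_cancel]
  exact e ▸ sub_mem (smul_mem _ _ hX) (h X hX Y hY)

theorem det_smul_one_mem (hmul : ∀ X ∈ Λ, ∀ Y ∈ Λ, X * Y ∈ Λ) {X : Matrix (Fin 2) (Fin 2) R}
    (hX : X ∈ Λ) : X.det • (1 : Matrix (Fin 2) (Fin 2) R) ∈ Λ :=
  det_smul_one_fin_two X ▸ sub_mem (smul_mem _ _ hX) (hmul X hX X hX)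

end Matrix

section LinearAlgebra

variable {R M : Type*} [CommRing R] [AddCommGroup M] [Module R M]

theorem Submodule.span_pair_eq_of_mul_add_mul_eq_one {a b u v : R} (h : u * a + v * b = 1)
    (B C : M) : span R {B, C} = span R {v • B - u • C, a • B + b • C} := by
  apply le_antisymm <;> rw [span_le, Set.insert_subset_iff, Set.singleton_subset_iff] <;>
    refine ⟨mem_span_pair.mpr ?_, mem_span_pair.mpr ?_⟩
  · exact ⟨b, u, by linear_combination (norm := module) h • B⟩
  · exact ⟨-a, v, by linear_combination (norm := module) h • C⟩
  · exact ⟨v, -u, by rw [neg_smul, sub_eq_add_neg]⟩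
  · exact ⟨a, b, rfl⟩

theorem not_linearIndependent_pair_smul [Nontrivial R] (x : M) (β γ : R) :
    ¬LinearIndependent R ![β • x, γ • x] := by
  intro hli
  have hrel : γ • (β • x) + (-β) • (γ • x) = 0 := by module
  obtain ⟨-, hβ⟩ := LinearIndependent.pair_iff.mp hli γ (-β) hrel
  exact hli.ne_zero 0 (by simp [neg_eq_zero.mp hβ])

theorem LinearIndependent.ne_smul_of_span_pair_eq [Nontrivial R] {B C A x : M} {c : R}
    (hBC : LinearIndependent R ![B, C]) (h : span R {B, C} = span R {A, c • x}) (t : R) :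
    A ≠ t • x := by
  rintro rfl
  have hle : span R {B, C} ≤ R ∙ x := by
    rw [h, span_le, Set.insert_subset_iff, Set.singleton_subset_iff]
    exact ⟨smul_mem _ _ (mem_span_singleton_self x), smul_mem _ _ (mem_span_singleton_self x)⟩
  obtain ⟨β, rfl⟩ := mem_span_singleton.mp (hle (subset_span (Set.mem_insert B {C})))
  obtain ⟨γ, rfl⟩ := mem_span_singleton.mp (hle (subset_span (Set.mem_insert_of_mem _ rfl)))
  exact not_linearIndependent_pair_smul x β γ hBC

end LinearAlgebra

namespace Matrix

variable {n : Type*} [DecidableEq n]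

theorem eq_zero_of_smul_eq_smul_one {R : Type*} [CommRing R] [IsDomain R] {A : Matrix n n R}
    (hA : ∀ t : R, A ≠ t • 1) {m c : R} (h : m • A = c • 1) : m = 0 := by
  by_contra hm
  cases isEmpty_or_nonempty n
  · exact hA 0 (Subsingleton.elim _ _)
  obtain ⟨i⟩ := ‹Nonempty n›
  have entry (j k : n) : m * A j k = c * (1 : Matrix n n R) j k := by
    simpa using congrFun (congrFun h j) k
  refine hA (A i i) (ext fun j k => mul_left_cancel₀ hm ?_)
  by_cases hjk : j = k
  · subst hjk; simp [entry]
  · simp [entry, hjk]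

theorem exists_isCoprime_smul_eq_smul_one [Fintype n] [Nonempty n] {B C : Matrix n n ℤ} {d : ℤ}
    (hd : d ≠ 0) (h : d • (1 : Matrix n n ℤ) ∈ span ℤ {B, C}) :
    ∃ a b s : ℤ, IsCoprime a b ∧ a • B + b • C = s • (1 : Matrix n n ℤ) := by
  obtain ⟨p, q, hpq⟩ := mem_span_pair.mp h
  have hgcd : 0 < Int.gcd p q := by
    refine Nat.pos_of_ne_zero fun h0 => ?_
    obtain ⟨rfl, rfl⟩ := Int.gcd_eq_zero_iff.mp h0
    rw [zero_smul, zero_smul, add_zero, eq_comm, smul_eq_zero] at hpq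
    exact hpq.elim hd one_ne_zero
  obtain ⟨g, a, b, hg, hab, rfl, rfl⟩ := Int.exists_gcd_one' hgcd
  set Z := a • B + b • C
  have hZ : (g : ℤ) • Z = d • (1 : Matrix n n ℤ) := by
    rw [← hpq, smul_add, smul_smul, smul_smul, mul_comm, mul_comm (g : ℤ)]
  obtain ⟨i⟩ := ‹Nonempty n›
  have hdi : d = g * Z i i := by simpa using (congrFun (congrFun hZ i) i).symm
  refine ⟨a, b, Z i i, Int.isCoprime_iff_gcd_eq_one.mpr hab,
    smul_right_injective _ (Int.natCast_ne_zero.mpr hg.ne') ?_⟩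
  change (g : ℤ) • Z = (g : ℤ) • (Z i i • 1)
  rw [smul_smul, ← hdi]
  exact hZ

end Matrix

/-- Any non-null 2-dimensional sublattice of `Mat₂(ℤ)` stable under one of the
pairings `S₁(X,Y) = XY`, `S₂(X,Y) = adj(X)·Y`, `S₃(X,Y) = X·adj(Y)` is the
ℤ-span of a matrix `A` and a scalar matrix `r·E` with `r ∣ det A`. -/
theorem stmt16 (Λ : Submodule ℤ (Matrix (Fin 2) (Fin 2) ℤ))
    (hlat : ∃ B C : Matrix (Fin 2) (Fin 2) ℤ,
      LinearIndependent ℤ ![B, C] ∧ Λ = Submodule.span ℤ {B, C})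
    (hnonnull : ∃ X ∈ Λ, X.det ≠ 0)
    (hstab : (∀ X ∈ Λ, ∀ Y ∈ Λ, X * Y ∈ Λ) ∨
             (∀ X ∈ Λ, ∀ Y ∈ Λ, X.adjugate * Y ∈ Λ) ∨
             (∀ X ∈ Λ, ∀ Y ∈ Λ, X * Y.adjugate ∈ Λ)) :
    ∃ (A : Matrix (Fin 2) (Fin 2) ℤ) (r : ℤ), r ∣ A.det ∧
      Λ = Submodule.span ℤ {A, r • (1 : Matrix (Fin 2) (Fin 2) ℤ)} := by
  obtain ⟨B, C, hBC, rfl⟩ := hlat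
  have hmul : ∀ X ∈ span ℤ {B, C}, ∀ Y ∈ span ℤ {B, C}, X * Y ∈ span ℤ {B, C} := by
    rcases hstab with h | h | h
    exacts [h, mul_mem_of_adjugate_mul_mem h, mul_mem_of_mul_adjugate_mem h]
  obtain ⟨X, hX, hdet⟩ := hnonnull
  obtain ⟨a, b, s, ⟨u, v, huv⟩, hs⟩ :=
    exists_isCoprime_smul_eq_smul_one hdet (det_smul_one_mem hmul hX)
  set A := v • B - u • C
  have hspan : span ℤ {B, C} = span ℤ {A, s • (1 : Matrix (Fin 2) (Fin 2) ℤ)} := by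
    rw [← hs]; exact span_pair_eq_of_mul_add_mul_eq_one huv B C
  have hA : A ∈ span ℤ {B, C} := by rw [hspan]; exact subset_span (Set.mem_insert A _)
  have hdetA := det_smul_one_mem hmul hA
  rw [hspan] at hdetA
  obtain ⟨m, k, hmk⟩ := mem_span_pair.mp hdetA
  have hmA : m • A = (A.det - k * s) • (1 : Matrix (Fin 2) (Fin 2) ℤ) := by
    rw [sub_smul, ← hmk, mul_smul, add_sub_cancel_right]
  have hm : m = 0 := eq_zero_of_smul_eq_smul_one (hBC.ne_smul_of_span_pair_eq hspan) hmA
  refine ⟨A, s, ⟨k, ?_⟩, hspan⟩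
  rw [hm, zero_smul, zero_add, smul_smul] at hmk
  simpa [mul_comm] using (congrFun (congrFun hmk 0) 0).symm
end

section
/- Let Λ be a 2-dimensional sublattice of the 2×2 integer matrices, i.e. a ℤ-submodule spanned by two ℤ-linearly independent matrices, and suppose Λ is stable under the pairing S₄(X,Y) = adj(X·Y), meaning adj(X·Y) ∈ Λ for all X, Y ∈ Λ. Then there exist an integer matrix A and an integer r such that r divides trace(A)² − det(A) and Λ is the ℤ-span of A and r·E, where E is the identity matrix. In particular, Λ contains a nonzero scalar matrix. -/
/-!
With `q(X) = (tr X)² − det X`, Cayley–Hamilton gives `q(X) • 1 = adj (X * X) + tr X • X`, so `Λ`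
contains `q(X) • 1` for every `X ∈ Λ`. On matrices with `X₀₁ = X₁₀` the form
`q = a² + ad + d² + b²` is positive definite, and the rank-two lattice `Λ` meets the kernel of the
functional `X ↦ X₀₁ − X₁₀` nontrivially; hence the scalar matrices in `Λ` form a nonzero ideal
`r ℤ • 1`. As `r • 1` is primitive in `Λ`, its coordinates in a basis of `Λ` are coprime, so it
extends to a basis `{A, r • 1}`, and `r ∣ q(A)` because `q(A) • 1 ∈ Λ`.
-/

open Matrix Submodule

namespace Matrix

theorem trace_sq_sub_det_smul_one {R : Type*} [CommRing R] (X : Matrix (Fin 2) (Fin 2) R) :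
    (X.trace ^ 2 - X.det) • (1 : Matrix (Fin 2) (Fin 2) R) = (X * X).adjugate + X.trace • X := by
  rw [adjugate_fin_two, X.eta_fin_two]
  ext i j
  fin_cases i <;> fin_cases j <;> simp [trace_fin_two, det_fin_two] <;> ring

theorem trace_sq_sub_det_smul_one_mem {R : Type*} [CommRing R]
    {Λ : Submodule R (Matrix (Fin 2) (Fin 2) R)}
    (hstab : ∀ X ∈ Λ, ∀ Y ∈ Λ, (X * Y).adjugate ∈ Λ) {X : Matrix (Fin 2) (Fin 2) R} (hX : X ∈ Λ) :
    (X.trace ^ 2 - X.det) • (1 : Matrix (Fin 2) (Fin 2) R) ∈ Λ :=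
  X.trace_sq_sub_det_smul_one ▸ add_mem (hstab X hX X hX) (Λ.smul_mem _ hX)

theorem trace_sq_sub_det_pos {R : Type*} [CommRing R] [LinearOrder R] [IsStrictOrderedRing R]
    {X : Matrix (Fin 2) (Fin 2) R} (hX : X ≠ 0) (hsymm : X 0 1 = X 1 0) :
    0 < X.trace ^ 2 - X.det := by
  rw [trace_fin_two, det_fin_two, ← hsymm]
  by_contra! hle
  refine hX (X.eta_fin_two.trans ?_)
  have h4 : (2 * X 0 0 + X 1 1) ^ 2 + 3 * X 1 1 ^ 2 + 4 * X 0 1 ^ 2 ≤ 0 := by nlinarith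
  have h11 : X 1 1 = 0 := by
    nlinarith [sq_nonneg (2 * X 0 0 + X 1 1), sq_nonneg (X 1 1), sq_nonneg (X 0 1)]
  have h01 : X 0 1 = 0 := by
    nlinarith [sq_nonneg (2 * X 0 0 + X 1 1), sq_nonneg (X 1 1), sq_nonneg (X 0 1)]
  have h00 : X 0 0 = 0 := by
    rw [h11] at h4
    nlinarith [sq_nonneg (X 0 0), sq_nonneg (X 0 1)]
  ext i j
  fin_cases i <;> fin_cases j <;> simp [h00, h01, h11, ← hsymm]

theorem smul_one_injective {n R : Type*} [DecidableEq n] [Nonempty n] [Semiring R] :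
    Function.Injective fun a : R => a • (1 : Matrix n n R) := by
  intro a b h
  obtain ⟨i⟩ := ‹Nonempty n›
  simpa using congrFun (congrFun h i) i

theorem exists_eq_smul_one_of_smul_eq_smul_one {n R : Type*} [DecidableEq n] [Nonempty n]
    [Ring R] [NoZeroDivisors R] {g r : R} {w : Matrix n n R} (hg : g ≠ 0)
    (h : g • w = r • 1) : ∃ c : R, w = c • 1 := by
  obtain ⟨i₀⟩ := ‹Nonempty n›
  have hent (i j : n) : g * w i j = r * (1 : Matrix n n R) i j := by
    simpa using congrFun (congrFun h i) j
  refine ⟨w i₀ i₀, ext fun i j => ?_⟩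
  rcases eq_or_ne i j with rfl | hij
  · rw [smul_apply, one_apply_eq, smul_eq_mul, mul_one]
    exact mul_left_cancel₀ hg (by rw [hent, hent, one_apply_eq, one_apply_eq])
  · simpa [hij, hg] using hent i j

end Matrix

theorem LinearIndependent.exists_ne_zero_mem_span_pair_ker {R M : Type*} [CommRing R]
    [Nontrivial R] [AddCommGroup M] [Module R M] {B C : M} (h : LinearIndependent R ![B, C])
    (φ : M →ₗ[R] R) : ∃ X ∈ span R {B, C}, X ≠ 0 ∧ φ X = 0 := by
  by_cases hX : φ C • B - φ B • C = 0
  · obtain ⟨-, hB⟩ :=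
      LinearIndependent.pair_iff.mp h _ _ (by rwa [sub_eq_add_neg, ← neg_smul] at hX)
    exact ⟨B, subset_span (by simp), h.ne_zero 0, neg_eq_zero.mp hB⟩
  · refine ⟨_, mem_span_pair.mpr ⟨φ C, -φ B, by rw [neg_smul, ← sub_eq_add_neg]⟩, hX, ?_⟩
    simp [mul_comm]

theorem exists_span_pair_eq_span_pair_of_isCoprime {R M : Type*} [CommRing R]
    [AddCommGroup M] [Module R M] {B C : M} {x y : R} (hxy : IsCoprime x y) :
    ∃ A : M, span R {B, C} = span R {A, x • B + y • C} := by
  obtain ⟨u, v, huv⟩ := hxy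
  refine ⟨-v • B + u • C, le_antisymm ?_ ?_⟩ <;>
    rw [span_le, Set.insert_subset_iff, Set.singleton_subset_iff]
  · exact ⟨mem_span_pair.mpr ⟨-y, u, by linear_combination (norm := module) huv • B⟩,
      mem_span_pair.mpr ⟨x, v, by linear_combination (norm := module) huv • C⟩⟩
  · exact ⟨mem_span_pair.mpr ⟨-v, u, rfl⟩, mem_span_pair.mpr ⟨x, y, rfl⟩⟩

namespace Submodule

theorem exists_forall_smul_mem_iff_dvd {R M : Type*} [CommRing R] [IsPrincipalIdealRing R]
    [AddCommGroup M] [Module R M] (N : Submodule R M) (x : M) :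
    ∃ r : R, ∀ s : R, s • x ∈ N ↔ r ∣ s := by
  obtain ⟨r, hr⟩ := (IsPrincipalIdealRing.principal (N.colon {x})).principal
  exact ⟨r, fun s => by rw [← mem_colon_singleton, hr, Ideal.mem_span_singleton]⟩

def IsPrimitive {R M : Type*} [Semiring R] [AddCommMonoid M] [Module R M]
    (N : Submodule R M) (P : M) : Prop :=
  ∀ g : R, ∀ w ∈ N, g • w = P → IsUnit g

theorem IsPrimitive.isCoprime {M : Type*} [AddCommGroup M] {B C : M} {x y : ℤ}
    (h : (span ℤ {B, C}).IsPrimitive (x • B + y • C)) : IsCoprime x y := by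
  obtain ⟨x', hx⟩ := Int.gcd_dvd_left x y
  obtain ⟨y', hy⟩ := Int.gcd_dvd_right x y
  have hunit := h (x.gcd y) (x' • B + y' • C) (mem_span_pair.mpr ⟨x', y', rfl⟩)
    (by rw [smul_add, smul_smul, smul_smul, ← hx, ← hy])
  rwa [Int.isCoprime_iff_gcd_eq_one, ← Int.natAbs_natCast (x.gcd y), ← Int.isUnit_iff_natAbs_eq]

theorem isPrimitive_smul_one {n R : Type*} [DecidableEq n] [Nonempty n]
    [CommRing R] [IsDomain R] {Λ : Submodule R (Matrix n n R)} {r : R}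
    (hr : ∀ s : R, s • (1 : Matrix n n R) ∈ Λ ↔ r ∣ s) (hr0 : r ≠ 0) :
    Λ.IsPrimitive (r • 1) := by
  intro g w hw hgw
  have hg : g ≠ 0 := by
    rintro rfl
    exact hr0 (smul_one_injective (n := n)
      (hgw.symm.trans ((zero_smul R w).trans (zero_smul R 1).symm)))
  obtain ⟨c, rfl⟩ := exists_eq_smul_one_of_smul_eq_smul_one hg hgw
  obtain ⟨k, rfl⟩ := (hr c).mp hw
  rw [smul_smul] at hgw
  refine IsUnit.of_mul_eq_one k (mul_left_cancel₀ hr0 ?_)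
  linear_combination smul_one_injective hgw

end Submodule

/-- Any 2-dimensional sublattice of `Mat₂(ℤ)` stable under the pairing
`S₄(X,Y) = adj(X·Y)` is the ℤ-span of a matrix `A` and a scalar matrix `r·E`
with `r ∣ (tr A)² − det A`; in particular it contains a nonzero scalar matrix. -/
theorem stmt17 (Λ : Submodule ℤ (Matrix (Fin 2) (Fin 2) ℤ))
    (hlat : ∃ B C : Matrix (Fin 2) (Fin 2) ℤ,
      LinearIndependent ℤ ![B, C] ∧ Λ = Submodule.span ℤ {B, C})
    (hstab : ∀ X ∈ Λ, ∀ Y ∈ Λ, (X * Y).adjugate ∈ Λ) :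
    (∃ (A : Matrix (Fin 2) (Fin 2) ℤ) (r : ℤ), r ∣ A.trace ^ 2 - A.det ∧
      Λ = Submodule.span ℤ {A, r • (1 : Matrix (Fin 2) (Fin 2) ℤ)}) ∧
    (∃ t : ℤ, t ≠ 0 ∧ t • (1 : Matrix (Fin 2) (Fin 2) ℤ) ∈ Λ) := by
  obtain ⟨B, C, hBC, hΛ⟩ := hlat
  have hq {X} (hX : X ∈ Λ) := trace_sq_sub_det_smul_one_mem hstab hX
  obtain ⟨X, hXΛ, hX0, hXsymm⟩ :=
    hBC.exists_ne_zero_mem_span_pair_ker (entryLinearMap ℤ ℤ 0 1 - entryLinearMap ℤ ℤ 1 0)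
  rw [← hΛ] at hXΛ
  have hqX := trace_sq_sub_det_pos hX0 (sub_eq_zero.mp hXsymm)
  obtain ⟨r, hr⟩ := Λ.exists_forall_smul_mem_iff_dvd 1
  have hr0 : r ≠ 0 := by
    rintro rfl
    exact hqX.ne' (zero_dvd_iff.mp ((hr _).mp (hq hXΛ)))
  obtain ⟨x, y, hxy⟩ := mem_span_pair.mp (hΛ ▸ (hr r).mpr dvd_rfl)
  have hprim : (span ℤ {B, C}).IsPrimitive (x • B + y • C) :=
    hΛ ▸ hxy ▸ isPrimitive_smul_one hr hr0
  obtain ⟨A, hA⟩ := exists_span_pair_eq_span_pair_of_isCoprime (B := B) (C := C) hprim.isCoprime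
  rw [hxy, ← hΛ] at hA
  exact ⟨⟨A, r, (hr _).mp (hq (hA ▸ subset_span (by simp))), hA⟩, _, hqX.ne', hq hXΛ⟩
end

section
/- Let f be any quadratic form on ℝ², let F(x,y) = (f(x+y) − f(x) − f(y))/2 be its polarization, and define the trilinear map [x,y,e] = −F(x,y)·e + F(x,e)·y + F(y,e)·x. Then: (i) for all x, y, e ∈ ℝ², f([x,y,e]) = f(x)·f(y)·f(e) (the trigroup property); and (ii) if f takes integer values at all points of ℤ², then [x,y,e] ∈ ℤ² for all x, y, e ∈ ℤ², even though the values of F on ℤ² × ℤ² may be half-integers. -/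
/-- The trigroup law `[x,y,e] = −F(x,y)e + F(x,e)y + F(y,e)x` built from the
polarization `F` of a quadratic form `f` satisfies
`f([x,y,e]) = f(x)f(y)f(e)`; moreover, if `f` is integer-valued on `ℤ²`, then
the trigroup law maps triples of integer vectors to integer vectors. -/
theorem stmt18 (m k n : ℝ) (f : ℝ × ℝ → ℝ)
    (hf : ∀ x : ℝ × ℝ, f x = m * x.1 ^ 2 + k * x.1 * x.2 + n * x.2 ^ 2)
    (F : ℝ × ℝ → ℝ × ℝ → ℝ)
    (hF : ∀ x y : ℝ × ℝ, F x y = (f (x + y) - f x - f y) / 2)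
    (T : ℝ × ℝ → ℝ × ℝ → ℝ × ℝ → ℝ × ℝ)
    (hT : ∀ x y e : ℝ × ℝ, T x y e = -(F x y) • e + (F x e) • y + (F y e) • x) :
    (∀ x y e : ℝ × ℝ, f (T x y e) = f x * f y * f e) ∧
    ((∀ x : ℝ × ℝ, IsIntVec x → ∃ z : ℤ, f x = (z : ℝ)) →
      ∀ x y e : ℝ × ℝ, IsIntVec x → IsIntVec y → IsIntVec e → IsIntVec (T x y e)) := by
  constructor
  · intro x y e
    obtain ⟨x1, x2⟩ := x
    obtain ⟨y1, y2⟩ := y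
    obtain ⟨e1, e2⟩ := e
    simp only [hT, hF, hf, Prod.smul_mk, Prod.mk_add_mk, Prod.neg_mk, smul_eq_mul,
      Prod.fst, Prod.snd]
    ring
  · intro hint x y e hx hy he
    -- m, n, k are (shifted) integers
    obtain ⟨zm, hzm⟩ := hint (1, 0) ⟨1, 0, by norm_num⟩
    obtain ⟨zn, hzn⟩ := hint (0, 1) ⟨0, 1, by norm_num⟩
    obtain ⟨zs, hzs⟩ := hint (1, 1) ⟨1, 1, by norm_num⟩
    rw [hf] at hzm hzn hzs
    simp only [Prod.fst, Prod.snd] at hzm hzn hzs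
    have hm : m = (zm : ℝ) := by linarith [hzm]; 
    have hn : n = (zn : ℝ) := by nlinarith [hzn]
    have hk : k = ((zs - zm - zn : ℤ) : ℝ) := by push_cast; nlinarith [hzs]
    obtain ⟨a, b, rfl⟩ := hx
    obtain ⟨c, d, rfl⟩ := hy
    obtain ⟨p, q, rfl⟩ := he
    refine ⟨zm * (a * c * p) + (zs - zm - zn) * (a * c * q) + zn * (a * d * q + b * c * q - b * d * p),
      zn * (b * d * q) + (zs - zm - zn) * (b * d * p) + zm * (b * c * p + a * d * p - a * c * q),
      ?_⟩
    rw [hT]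
    simp only [hF, hf, Prod.smul_mk, Prod.mk_add_mk, Prod.neg_mk, smul_eq_mul,
      Prod.fst, Prod.snd]
    rw [hm, hn, hk]
    rw [Prod.mk.injEq]
    constructor <;> · push_cast; ring
end

section
/- Let L ⊂ ℂ be an integer-normed lattice (the ℤ-span of two elements linearly independent over ℝ, with |z|² ∈ ℤ for every z ∈ L) and suppose 1 ∈ L. Then L is closed under multiplication and under complex conjugation: for all z, w ∈ L one has z·w ∈ L and conj(z) ∈ L; consequently L is stable under all four operations σ₁(z,w) = z·w, σ₂(z,w) = conj(z)·w, σ₃(z,w) = z·conj(w), σ₄(z,w) = conj(z·w). -/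
/-!
For `z ∈ L`, expanding `|1 + z|²` shows that `z + z̄ = |1 + z|² - |z|² - 1` is an integer `t`,
so `z̄ = t - z ∈ L` and `z² = t z - |z|² ∈ L`. Writing `1 = p e₁ + q e₂`, a common divisor `d` of
`p` and `q` gives `1 = d u` with `u ∈ L`, hence `d² |u|² = 1` and `d = ±1`; so `1` extends to a
`ℤ`-basis `1, τ` of `L`, and `L = ℤ + ℤ τ` is a ring because `τ² ∈ L`.
-/

open Complex ComplexConjugate Submodule

theorem exists_span_pair_eq_span_pair_of_isCoprime_s19 {R M : Type*} [CommRing R] [AddCommGroup M]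
    [Module R M] {e₁ e₂ x : M} {p q : R} (hpq : IsCoprime p q) (hx : p • e₁ + q • e₂ = x) :
    ∃ τ : M, span R {e₁, e₂} = span R {x, τ} := by
  obtain ⟨u, v, huv⟩ := hpq
  refine ⟨-v • e₁ + u • e₂, le_antisymm ?_ ?_⟩ <;> rw [span_le, Set.insert_subset_iff,
    Set.singleton_subset_iff] <;> simp only [SetLike.mem_coe, mem_span_pair]
  · refine ⟨⟨u, -q, ?_⟩, v, p, ?_⟩
    · rw [← hx]; linear_combination (norm := module) huv • e₁
    · rw [← hx]; linear_combination (norm := module) huv • e₂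
  · exact ⟨⟨p, q, hx⟩, -v, u, rfl⟩

theorem mul_mem_span_one_pair {R A : Type*} [CommRing R] [CommRing A] [Algebra R A] {τ z w : A}
    (hτ : τ ^ 2 ∈ span R {1, τ}) (hz : z ∈ span R {1, τ}) (hw : w ∈ span R {1, τ}) :
    z * w ∈ span R {1, τ} := by
  rw [mem_span_pair] at *
  obtain ⟨m, n, hmn⟩ := hτ
  obtain ⟨a, b, rfl⟩ := hz
  obtain ⟨c, d, rfl⟩ := hw
  refine ⟨a * c + b * d * m, a * d + b * c + b * d * n, ?_⟩
  simp only [Algebra.smul_def, map_add, map_mul, mul_one] at hmn ⊢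
  linear_combination (algebraMap R A b * algebraMap R A d) * hmn

section IntegerNormed

variable {L : Submodule ℤ ℂ}

theorem intCast_mem_of_one_mem (hone : (1 : ℂ) ∈ L) (n : ℤ) : (n : ℂ) ∈ L := by
  simpa using L.smul_mem n hone

theorem isUnit_of_intCast_mul_eq_one (hnormed : ∀ z ∈ L, ∃ n : ℤ, normSq z = n) {d : ℤ} {u : ℂ}
    (hu : u ∈ L) (h : d * u = 1) : IsUnit d := by
  obtain ⟨m, hm⟩ := hnormed u hu
  have hdm : d * (d * m) = 1 := by
    have := congrArg normSq h
    rw [normSq_mul, normSq_intCast, hm, normSq_one] at this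
    exact_mod_cast (by linear_combination this : (d : ℝ) * (d * m) = 1)
  exact .of_mul_eq_one _ hdm

theorem exists_add_conj_eq_intCast (hnormed : ∀ z ∈ L, ∃ n : ℤ, normSq z = n)
    (hone : (1 : ℂ) ∈ L) {z : ℂ} (hz : z ∈ L) : ∃ t : ℤ, z + conj z = t := by
  obtain ⟨n, hn⟩ := hnormed z hz
  obtain ⟨n₁, hn₁⟩ := hnormed (1 + z) (L.add_mem hone hz)
  have h := mul_conj z
  have h₁ := mul_conj (1 + z)
  rw [hn] at h
  rw [hn₁, map_add, map_one] at h₁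
  refine ⟨n₁ - 1 - n, ?_⟩
  push_cast at h h₁ ⊢
  linear_combination h₁ - h

theorem conj_mem_of_normSq_eq_intCast (hnormed : ∀ z ∈ L, ∃ n : ℤ, normSq z = n)
    (hone : (1 : ℂ) ∈ L) {z : ℂ} (hz : z ∈ L) : conj z ∈ L := by
  obtain ⟨t, ht⟩ := exists_add_conj_eq_intCast hnormed hone hz
  rw [eq_sub_of_add_eq' ht]
  exact L.sub_mem (intCast_mem_of_one_mem hone t) hz

theorem sq_mem_of_normSq_eq_intCast (hnormed : ∀ z ∈ L, ∃ n : ℤ, normSq z = n)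
    (hone : (1 : ℂ) ∈ L) {z : ℂ} (hz : z ∈ L) : z ^ 2 ∈ L := by
  obtain ⟨t, ht⟩ := exists_add_conj_eq_intCast hnormed hone hz
  obtain ⟨n, hn⟩ := hnormed z hz
  have hsq : z ^ 2 = t • z - (n : ℂ) := by
    have h := mul_conj z
    rw [hn, ofReal_intCast] at h
    rw [zsmul_eq_mul, ← ht]
    linear_combination -h
  rw [hsq]
  exact L.sub_mem (L.smul_mem t hz) (intCast_mem_of_one_mem hone n)

theorem isCoprime_of_zsmul_add_zsmul_eq_one (hnormed : ∀ z ∈ L, ∃ n : ℤ, normSq z = n)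
    {e₁ e₂ : ℂ} (he₁ : e₁ ∈ L) (he₂ : e₂ ∈ L) {p q : ℤ} (h : p • e₁ + q • e₂ = 1) :
    IsCoprime p q := by
  rw [← isRelPrime_iff_isCoprime]
  rintro d ⟨p', rfl⟩ ⟨q', rfl⟩
  refine isUnit_of_intCast_mul_eq_one hnormed
    (L.add_mem (L.smul_mem p' he₁) (L.smul_mem q' he₂)) ?_
  rw [← h]
  simp only [zsmul_eq_mul]
  push_cast
  ring

end IntegerNormed

theorem stmt19_general (e₁ e₂ : ℂ)
    (L : Set ℂ) (hL : L = {z : ℂ | ∃ a b : ℤ, z = (a : ℂ) * e₁ + (b : ℂ) * e₂})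
    (hnormed : ∀ z ∈ L, ∃ nz : ℤ, Complex.normSq z = (nz : ℝ))
    (hone : (1 : ℂ) ∈ L) :
    (∀ z ∈ L, ∀ w ∈ L, z * w ∈ L) ∧
    (∀ z ∈ L, (starRingEnd ℂ) z ∈ L) ∧
    (∀ z ∈ L, ∀ w ∈ L, (starRingEnd ℂ) z * w ∈ L) ∧
    (∀ z ∈ L, ∀ w ∈ L, z * (starRingEnd ℂ) w ∈ L) ∧
    (∀ z ∈ L, ∀ w ∈ L, (starRingEnd ℂ) (z * w) ∈ L) := by
  obtain rfl : L = span ℤ {e₁, e₂} := by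
    ext z
    simp [hL, mem_span_pair, zsmul_eq_mul, eq_comm]
  obtain ⟨p, q, hpq⟩ := mem_span_pair.mp hone
  have hcop := isCoprime_of_zsmul_add_zsmul_eq_one hnormed
    (subset_span (by simp)) (subset_span (by simp)) hpq
  obtain ⟨τ, hτ⟩ := exists_span_pair_eq_span_pair_of_isCoprime_s19 hcop hpq
  rw [hτ] at hnormed hone ⊢
  have hconj : ∀ z ∈ span ℤ {1, τ}, conj z ∈ span ℤ {1, τ} :=
    fun z hz ↦ conj_mem_of_normSq_eq_intCast hnormed hone hz
  have hmul : ∀ z ∈ span ℤ {1, τ}, ∀ w ∈ span ℤ {1, τ}, z * w ∈ span ℤ {1, τ} :=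
    fun z hz w hw ↦ mul_mem_span_one_pair
      (sq_mem_of_normSq_eq_intCast hnormed hone (subset_span (by simp))) hz hw
  exact ⟨hmul, hconj, fun z hz w hw ↦ hmul _ (hconj z hz) w hw,
    fun z hz w hw ↦ hmul z hz _ (hconj w hw), fun z hz w hw ↦ hconj _ (hmul z hz w hw)⟩

/-- An integer-normed lattice in `ℂ` containing 1 is closed under multiplication
and complex conjugation; consequently it is stable under all four operations
`σ₁(z,w) = zw`, `σ₂(z,w) = z̄w`, `σ₃(z,w) = zw̄`, `σ₄(z,w) = conj(zw)`. -/
theorem stmt19 (e₁ e₂ : ℂ) (hli : LinearIndependent ℝ ![e₁, e₂])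
    (L : Set ℂ) (hL : L = {z : ℂ | ∃ a b : ℤ, z = (a : ℂ) * e₁ + (b : ℂ) * e₂})
    (hnormed : ∀ z ∈ L, ∃ nz : ℤ, Complex.normSq z = (nz : ℝ))
    (hone : (1 : ℂ) ∈ L) :
    (∀ z ∈ L, ∀ w ∈ L, z * w ∈ L) ∧
    (∀ z ∈ L, (starRingEnd ℂ) z ∈ L) ∧
    (∀ z ∈ L, ∀ w ∈ L, (starRingEnd ℂ) z * w ∈ L) ∧
    (∀ z ∈ L, ∀ w ∈ L, z * (starRingEnd ℂ) w ∈ L) ∧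
    (∀ z ∈ L, ∀ w ∈ L, (starRingEnd ℂ) (z * w) ∈ L) :=
  stmt19_general e₁ e₂ L hL hnormed hone
end
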